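/- arXiv:1609.08669 — 4 statements merged into one kernel-verified Lean document; each statement's English description precedes it below -/
import Mathlib

section
/- Let Ω ⊆ ℝ^d be a bounded open set, let L denote the normalized Lebesgue measure on Ω, and let f, g ∈ L^p(L; ℝ^m) with p ≥ 1. Then lim_{λ→0⁺} d_{TL^p_λ}((f,L),(g,L)) = ‖f−g‖_{L^p(L)}. -/
open MeasureTheory Filter
open scoped ENNReal NNReal

noncomputable section

def lpPow (p : ℝ) {n : ℕ} (x y : Fin n → ℝ) : ℝ := ∑ i, |x i - y i| ^ p

section AuxTLP

variable {p : ℝ} {n : ℕ}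

lemma lpPow_nonneg (p : ℝ) (x y : Fin n → ℝ) : 0 ≤ lpPow p x y :=
  Finset.sum_nonneg fun i _ => Real.rpow_nonneg (abs_nonneg _) _

lemma lpPow_self (hp : p ≠ 0) (x : Fin n → ℝ) : lpPow p x x = 0 := by
  simp [lpPow, Real.zero_rpow hp]

lemma lpPow_zero_eq (x : Fin n → ℝ) : lpPow p x 0 = ∑ i, |x i| ^ p := by
  simp [lpPow]

lemma lpPow_sub_zero (x y : Fin n → ℝ) : lpPow p x y = lpPow p (x - y) 0 := by
  simp [lpPow]

lemma lpPow_neg (x : Fin n → ℝ) : lpPow p (-x) 0 = lpPow p x 0 := by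
  simp [lpPow, abs_neg]

lemma measurable_lpPow {α : Type*} [MeasurableSpace α] (p : ℝ)
    {u v : α → Fin n → ℝ} (hu : Measurable u) (hv : Measurable v) :
    Measurable fun a => lpPow p (u a) (v a) := by
  apply Finset.measurable_sum
  intro i _
  exact ((((measurable_pi_apply i).comp hu).sub
    ((measurable_pi_apply i).comp hv)).abs.pow measurable_const)

/-- two-point power inequality -/
lemma rpow_add_le_two_rpow (hp : 0 ≤ p) {x y : ℝ} (hx : 0 ≤ x) (hy : 0 ≤ y) :
    (x + y) ^ p ≤ 2 ^ p * (x ^ p + y ^ p) := by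
  have h1 : x + y ≤ 2 * max x y := by
    rcases le_total x y with h | h
    · rw [max_eq_right h]; nlinarith
    · rw [max_eq_left h]; nlinarith
  calc (x + y) ^ p ≤ (2 * max x y) ^ p :=
        Real.rpow_le_rpow (by positivity) h1 hp
    _ = 2 ^ p * (max x y) ^ p := Real.mul_rpow (by norm_num) (le_max_of_le_left hx)
    _ ≤ 2 ^ p * (x ^ p + y ^ p) := by
        apply mul_le_mul_of_nonneg_left _ (by positivity)
        rcases le_total x y with h | h
        · rw [max_eq_right h]; nlinarith [Real.rpow_nonneg hx p]
        · rw [max_eq_left h]; nlinarith [Real.rpow_nonneg hy p]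

lemma lpPow_le_two_rpow (hp : 0 ≤ p) (x y : Fin n → ℝ) :
    lpPow p x y ≤ 2 ^ p * (lpPow p x 0 + lpPow p y 0) := by
  rw [lpPow_zero_eq, lpPow_zero_eq]
  show (∑ i, |x i - y i| ^ p) ≤ _
  calc (∑ i, |x i - y i| ^ p) ≤ ∑ i, 2 ^ p * (|x i| ^ p + |y i| ^ p) := by
        apply Finset.sum_le_sum
        intro i _
        calc |x i - y i| ^ p ≤ (|x i| + |y i|) ^ p :=
              Real.rpow_le_rpow (abs_nonneg _) (abs_sub _ _) hp
          _ ≤ 2 ^ p * (|x i| ^ p + |y i| ^ p) :=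
              rpow_add_le_two_rpow hp (abs_nonneg _) (abs_nonneg _)
    _ = 2 ^ p * ((∑ i, |x i| ^ p) + ∑ i, |y i| ^ p) := by
        rw [← Finset.sum_add_distrib, Finset.mul_sum]

/-- pointwise Minkowski inequality for the finite `ℓ^p` norm. -/
lemma lpPow_rpow_add_le (hp : 1 ≤ p) (a b : Fin n → ℝ) :
    lpPow p (a + b) 0 ^ (1 / p) ≤ lpPow p a 0 ^ (1 / p) + lpPow p b 0 ^ (1 / p) := by
  have hp0 : 0 < p := lt_of_lt_of_le one_pos hp
  haveI : Fact (1 ≤ ENNReal.ofReal p) :=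
    ⟨by simpa using ENNReal.ofReal_le_ofReal hp⟩
  have htr : (ENNReal.ofReal p).toReal = p := ENNReal.toReal_ofReal hp0.le
  let e := (WithLp.equiv (ENNReal.ofReal p) (Fin n → ℝ)).symm
  have h := norm_add_le (e a) (e b)
  have hnorm : ∀ x : Fin n → ℝ, ‖e x‖ = lpPow p x 0 ^ (1 / p) := by
    intro x
    rw [PiLp.norm_eq_sum (by rw [htr]; exact hp0)]
    simp only [htr, WithLp.equiv_symm_apply, PiLp.toLp_apply, Real.norm_eq_abs, lpPow, sub_zero,
      Pi.zero_apply, e]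
  have hadd : e (a + b) = e a + e b := by
    simp only [e, WithLp.equiv_symm_apply, WithLp.toLp_add]
  rw [← hadd, hnorm a, hnorm b, hnorm (a + b)] at h
  exact h

/-- The `L^p(μ, ℓ^p)` norm functional. -/
def NNp (p : ℝ) {α : Type*} [MeasurableSpace α] {n : ℕ} (μ : Measure α)
    (u : α → Fin n → ℝ) : ℝ≥0∞ :=
  (∫⁻ a, ENNReal.ofReal (lpPow p (u a) 0) ∂μ) ^ (1 / p)

variable {α : Type*} [MeasurableSpace α] {μ : Measure α} {u v : α → Fin n → ℝ}

lemma NNp_map {β : Type*} [MeasurableSpace β]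
    (μ : Measure α) {φ : α → β} (hφ : Measurable φ) {u : β → Fin n → ℝ}
    (hu : Measurable u) :
    NNp p (μ.map φ) u = NNp p μ (fun a => u (φ a)) := by
  unfold NNp
  rw [lintegral_map ((measurable_lpPow p hu measurable_const).ennreal_ofReal) hφ]

lemma NNp_congr (h : ∀ a, lpPow p (u a) 0 = lpPow p (v a) 0) :
    NNp p μ u = NNp p μ v := by
  unfold NNp
  congr 1
  exact lintegral_congr fun a => by rw [h a]

lemma NNp_lintegral_lt_top (hi : Integrable (fun a => lpPow p (u a) 0) μ) :
    ∫⁻ a, ENNReal.ofReal (lpPow p (u a) 0) ∂μ < ⊤ := by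
  refine lt_of_le_of_lt (lintegral_mono fun a => ?_) hi.2
  exact Real.ofReal_le_enorm _

lemma NNp_ne_top (hp0 : 0 < p) (hi : Integrable (fun a => lpPow p (u a) 0) μ) :
    NNp p μ u ≠ ⊤ := by
  unfold NNp
  exact (ENNReal.rpow_lt_top_of_nonneg (by positivity) (NNp_lintegral_lt_top hi).ne).ne

lemma NNp_toReal_rpow (hp0 : 0 < p) (hi : Integrable (fun a => lpPow p (u a) 0) μ) :
    (NNp p μ u).toReal ^ p = ∫ a, lpPow p (u a) 0 ∂μ := by
  unfold NNp
  rw [integral_eq_lintegral_of_nonneg_ae (Eventually.of_forall fun a => lpPow_nonneg p _ _)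
    hi.aestronglyMeasurable]
  rw [← ENNReal.toReal_rpow, one_div, Real.rpow_inv_rpow ENNReal.toReal_nonneg hp0.ne']

lemma NNp_add_le (hp : 1 ≤ p) (hu : Measurable u) (hv : Measurable v) :
    NNp p μ (u + v) ≤ NNp p μ u + NNp p μ v := by
  have hp0 : 0 < p := lt_of_lt_of_le one_pos hp
  set F := fun a => ENNReal.ofReal (lpPow p (u a) 0) ^ (1 / p) with hF
  set G := fun a => ENNReal.ofReal (lpPow p (v a) 0) ^ (1 / p) with hG
  have hrw : ∀ w : α → Fin n → ℝ, ∀ a : α,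
      (ENNReal.ofReal (lpPow p (w a) 0) ^ (1 / p)) ^ p
        = ENNReal.ofReal (lpPow p (w a) 0) := by
    intro w a
    rw [← ENNReal.rpow_mul, one_div, inv_mul_cancel₀ hp0.ne', ENNReal.rpow_one]
  have hFm : AEMeasurable F μ :=
    (((measurable_lpPow p hu measurable_const).ennreal_ofReal).pow
      measurable_const).aemeasurable
  have hGm : AEMeasurable G μ :=
    (((measurable_lpPow p hv measurable_const).ennreal_ofReal).pow
      measurable_const).aemeasurable
  have hpt : ∀ a, ENNReal.ofReal (lpPow p ((u + v) a) 0) ≤ (F a + G a) ^ p := by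
    intro a
    have h1 : lpPow p ((u + v) a) 0 ^ (1 / p) ≤
        lpPow p (u a) 0 ^ (1 / p) + lpPow p (v a) 0 ^ (1 / p) := by
      have : (u + v) a = u a + v a := rfl
      rw [this]
      exact lpPow_rpow_add_le hp _ _
    have h2 : lpPow p ((u + v) a) 0
        = (lpPow p ((u + v) a) 0 ^ (1 / p)) ^ p := by
      rw [one_div, Real.rpow_inv_rpow (lpPow_nonneg p _ _) hp0.ne']
    calc ENNReal.ofReal (lpPow p ((u + v) a) 0)
        = ENNReal.ofReal ((lpPow p ((u + v) a) 0 ^ (1 / p)) ^ p) := by rw [← h2]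
      _ ≤ ENNReal.ofReal ((lpPow p (u a) 0 ^ (1 / p) + lpPow p (v a) 0 ^ (1 / p)) ^ p) := by
          apply ENNReal.ofReal_le_ofReal
          exact Real.rpow_le_rpow (Real.rpow_nonneg (lpPow_nonneg p _ _) _) h1 hp0.le
      _ = ENNReal.ofReal (lpPow p (u a) 0 ^ (1 / p) + lpPow p (v a) 0 ^ (1 / p)) ^ p := by
          rw [ENNReal.ofReal_rpow_of_nonneg
            (add_nonneg (Real.rpow_nonneg (lpPow_nonneg p _ _) _)
              (Real.rpow_nonneg (lpPow_nonneg p _ _) _)) hp0.le]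
      _ = (F a + G a) ^ p := by
          rw [ENNReal.ofReal_add (Real.rpow_nonneg (lpPow_nonneg p _ _) _)
            (Real.rpow_nonneg (lpPow_nonneg p _ _) _)]
          simp only [hF, hG]
          rw [← ENNReal.ofReal_rpow_of_nonneg (lpPow_nonneg p _ _) (by positivity),
            ← ENNReal.ofReal_rpow_of_nonneg (lpPow_nonneg p _ _) (by positivity)]
  unfold NNp
  calc (∫⁻ a, ENNReal.ofReal (lpPow p ((u + v) a) 0) ∂μ) ^ (1 / p)
      ≤ (∫⁻ a, (F a + G a) ^ p ∂μ) ^ (1 / p) :=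
        ENNReal.rpow_le_rpow (lintegral_mono hpt) (by positivity)
    _ ≤ (∫⁻ a, F a ^ p ∂μ) ^ (1 / p) + (∫⁻ a, G a ^ p ∂μ) ^ (1 / p) :=
        ENNReal.lintegral_Lp_add_le hFm hGm hp
    _ = (∫⁻ a, ENNReal.ofReal (lpPow p (u a) 0) ∂μ) ^ (1 / p)
        + (∫⁻ a, ENNReal.ofReal (lpPow p (v a) 0) ∂μ) ^ (1 / p) := by
        congr 1
        · congr 1; exact lintegral_congr fun a => hrw u a
        · congr 1; exact lintegral_congr fun a => hrw v a

lemma NNp_indicator_le (hp0 : 0 < p) {A : Set α} (hA : MeasurableSet A) {C : ℝ}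
    (hb : ∀ a ∈ A, lpPow p (u a) 0 ≤ C) :
    NNp p μ (A.indicator u) ≤ ENNReal.ofReal C ^ (1 / p) * μ A ^ (1 / p) := by
  have hpt : ∀ a, ENNReal.ofReal (lpPow p (A.indicator u a) 0)
      ≤ A.indicator (fun _ => ENNReal.ofReal C) a := by
    intro a
    by_cases ha : a ∈ A
    · rw [Set.indicator_of_mem ha, Set.indicator_of_mem ha]
      exact ENNReal.ofReal_le_ofReal (hb a ha)
    · rw [Set.indicator_of_notMem ha, Set.indicator_of_notMem ha]
      simp [lpPow, Real.zero_rpow hp0.ne']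
  unfold NNp
  calc (∫⁻ a, ENNReal.ofReal (lpPow p (A.indicator u a) 0) ∂μ) ^ (1 / p)
      ≤ (∫⁻ a, A.indicator (fun _ => ENNReal.ofReal C) a ∂μ) ^ (1 / p) :=
        ENNReal.rpow_le_rpow (lintegral_mono hpt) (by positivity)
    _ = (ENNReal.ofReal C * μ A) ^ (1 / p) := by rw [lintegral_indicator_const hA]
    _ = _ := ENNReal.mul_rpow_of_nonneg _ _ (by positivity)

lemma NNp_le_of_bound (hp0 : 0 < p) {C : ℝ} (hb : ∀ a, lpPow p (u a) 0 ≤ C) :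
    NNp p μ u ≤ ENNReal.ofReal C ^ (1 / p) * μ Set.univ ^ (1 / p) := by
  have := NNp_indicator_le (μ := μ) hp0 MeasurableSet.univ (C := C)
    (fun a _ => hb a)
  rwa [Set.indicator_univ] at this

lemma NNp_le_eLpNorm (hp : 1 ≤ p) (v : α → Fin n → ℝ) :
    NNp p μ v ≤ (n : ℝ≥0∞) ^ (1 / p) * eLpNorm v (ENNReal.ofReal p) μ := by
  have hp0 : 0 < p := lt_of_lt_of_le one_pos hp
  have hpe0 : ENNReal.ofReal p ≠ 0 := by
    simp only [ne_eq, ENNReal.ofReal_eq_zero, not_le]; linarith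
  have hpet : ENNReal.ofReal p ≠ ⊤ := ENNReal.ofReal_ne_top
  rw [eLpNorm_eq_lintegral_rpow_enorm_toReal hpe0 hpet, ENNReal.toReal_ofReal hp0.le]
  unfold NNp
  rw [← ENNReal.mul_rpow_of_nonneg _ _ (by positivity)]
  apply ENNReal.rpow_le_rpow _ (by positivity)
  rw [← lintegral_const_mul' _ _ (by simp : (n : ℝ≥0∞) ≠ ⊤)]
  apply lintegral_mono
  intro a
  calc ENNReal.ofReal (lpPow p (v a) 0)
      = ∑ i, ENNReal.ofReal (|v a i| ^ p) := by
        rw [lpPow_zero_eq, ENNReal.ofReal_sum_of_nonneg]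
        intro i _; positivity
    _ ≤ ∑ _i : Fin n, (‖v a‖₊ : ℝ≥0∞) ^ p := by
        apply Finset.sum_le_sum
        intro i _
        rw [← ENNReal.ofReal_rpow_of_nonneg (abs_nonneg _) hp0.le]
        apply ENNReal.rpow_le_rpow _ hp0.le
        rw [← enorm_eq_nnnorm, ← ofReal_norm]
        apply ENNReal.ofReal_le_ofReal
        rw [← Real.norm_eq_abs]
        exact norm_le_pi_norm (v a) i
    _ = (n : ℝ≥0∞) * (‖v a‖₊ : ℝ≥0∞) ^ p := by
        rw [Finset.sum_const, Finset.card_univ, Fintype.card_fin, nsmul_eq_mul]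

lemma memLp_of_lpPow_integrable (hp : 1 ≤ p) {w : α → Fin n → ℝ} (hw : Measurable w)
    (hi : Integrable (fun a => lpPow p (w a) 0) μ) :
    MemLp w (ENNReal.ofReal p) μ := by
  have hp0 : 0 < p := lt_of_lt_of_le one_pos hp
  have hpe0 : ENNReal.ofReal p ≠ 0 := by
    simp only [ne_eq, ENNReal.ofReal_eq_zero, not_le]; linarith
  refine ⟨hw.aestronglyMeasurable, ?_⟩
  rw [eLpNorm_eq_lintegral_rpow_enorm_toReal hpe0 ENNReal.ofReal_ne_top,
    ENNReal.toReal_ofReal hp0.le]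
  apply ENNReal.rpow_lt_top_of_nonneg (by positivity)
  apply ne_of_lt
  refine lt_of_le_of_lt (lintegral_mono fun a => ?_) (NNp_lintegral_lt_top hi)
  have h1 : ‖w a‖ ≤ lpPow p (w a) 0 ^ (1 / p) := by
    rw [pi_norm_le_iff_of_nonneg (Real.rpow_nonneg (lpPow_nonneg p _ _) _)]
    intro i
    have h2 : |w a i| ^ p ≤ lpPow p (w a) 0 := by
      rw [lpPow_zero_eq]
      exact Finset.single_le_sum (f := fun i => |w a i| ^ p)
        (fun j _ => by positivity) (Finset.mem_univ i)
    calc ‖w a i‖ = (|w a i| ^ p) ^ (1 / p) := by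
          rw [Real.norm_eq_abs, one_div, Real.rpow_rpow_inv (abs_nonneg _) hp0.ne']
      _ ≤ lpPow p (w a) 0 ^ (1 / p) :=
          Real.rpow_le_rpow (by positivity) h2 (by positivity)
  calc (‖w a‖₊ : ℝ≥0∞) ^ p = ENNReal.ofReal (‖w a‖ ^ p) := by
        rw [← enorm_eq_nnnorm, ← ofReal_norm, ENNReal.ofReal_rpow_of_nonneg (norm_nonneg _) hp0.le]
    _ ≤ ENNReal.ofReal (lpPow p (w a) 0) := by
        apply ENNReal.ofReal_le_ofReal
        calc ‖w a‖ ^ p ≤ (lpPow p (w a) 0 ^ (1 / p)) ^ p :=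
              Real.rpow_le_rpow (norm_nonneg _) h1 hp0.le
          _ = lpPow p (w a) 0 := by
              rw [one_div, Real.rpow_inv_rpow (lpPow_nonneg p _ _) hp0.ne']

end AuxTLP
def Couplings {α β : Type*} [MeasurableSpace α] [MeasurableSpace β]
    (μ : Measure α) (ν : Measure β) : Set (Measure (α × β)) :=
  {π | π.fst = μ ∧ π.snd = ν}

def TLpPow {d m : ℕ} (p lam : ℝ) (f g : (Fin d → ℝ) → (Fin m → ℝ))
    (μ ν : Measure (Fin d → ℝ)) : ℝ :=
  sInf {r : ℝ | ∃ π ∈ Couplings μ ν,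
    r = ∫ z : (Fin d → ℝ) × (Fin d → ℝ),
      ((1 / lam) * lpPow p z.1 z.2 + lpPow p (f z.1) (g z.2)) ∂π}

def TLpDist {d m : ℕ} (p lam : ℝ) (f g : (Fin d → ℝ) → (Fin m → ℝ))
    (μ ν : Measure (Fin d → ℝ)) : ℝ := TLpPow p lam f g μ ν ^ (1 / p)

def nLeb {d : ℕ} (Ω : Set (Fin d → ℝ)) : Measure (Fin d → ℝ) :=
  (volume Ω)⁻¹ • volume.restrict Ω

set_option maxHeartbeats 2000000 in
/-- `lim_{λ→0⁺} d_{TL^p_λ}((f,L),(g,L)) = ‖f − g‖_{L^p(L)}` where `L` is the normalized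
Lebesgue measure on a bounded open set `Ω`. -/
theorem tlp_tendsto_Lp_of_lambda_to_zero
    {d m : ℕ} (p : ℝ) (hp : 1 ≤ p)
    (Ω : Set (Fin d → ℝ)) (hΩo : IsOpen Ω) (hΩb : Bornology.IsBounded Ω)
    (hΩne : Ω.Nonempty)
    (f g : (Fin d → ℝ) → (Fin m → ℝ))
    (hf : Measurable f) (hg : Measurable g)
    (hfp : Integrable (fun x => lpPow p (f x) 0) (nLeb Ω))
    (hgp : Integrable (fun x => lpPow p (g x) 0) (nLeb Ω)) :
    Tendsto (fun lam => TLpDist p lam f g (nLeb Ω) (nLeb Ω))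
      (nhdsWithin 0 (Set.Ioi 0))
      (nhds ((∫ x, lpPow p (f x) (g x) ∂(nLeb Ω)) ^ (1 / p))) := by
  have hp0 : 0 < p := lt_of_lt_of_le one_pos hp
  have hpne : p ≠ 0 := hp0.ne'
  set L := nLeb Ω with hLdef
  have hΩm : MeasurableSet Ω := hΩo.measurableSet
  have hvol0 : volume Ω ≠ 0 := (hΩo.measure_pos volume hΩne).ne'
  have hvolt : volume Ω ≠ ⊤ := hΩb.measure_lt_top.ne
  haveI hLprob : IsProbabilityMeasure L := by
    constructor
    rw [hLdef]
    simp only [nLeb, Measure.smul_apply, Measure.restrict_apply MeasurableSet.univ,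
      Set.univ_inter, smul_eq_mul]
    exact ENNReal.inv_mul_cancel hvol0 hvolt
  have hLcompl : L Ωᶜ = 0 := by
    rw [hLdef]
    simp only [nLeb, Measure.smul_apply, Measure.restrict_apply hΩm.compl,
      Set.compl_inter_self, measure_empty, mul_zero, smul_eq_mul]
  have hmeas_fg : Measurable fun x => lpPow p (f x) (g x) := measurable_lpPow p hf hg
  have hint_fg : Integrable (fun x => lpPow p (f x) (g x)) L := by
    apply Integrable.mono' ((hfp.add hgp).const_mul (2 ^ p)) hmeas_fg.aestronglyMeasurable
    apply Eventually.of_forall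
    intro x
    rw [Real.norm_eq_abs, abs_of_nonneg (lpPow_nonneg p _ _)]
    exact lpPow_le_two_rpow hp0.le _ _
  set I := ∫ x, lpPow p (f x) (g x) ∂L with hIdef
  have hI0 : 0 ≤ I := integral_nonneg fun x => lpPow_nonneg p _ _
  have hfg_eq : ∀ x, lpPow p ((f - g) x) 0 = lpPow p (f x) (g x) := fun x =>
    (lpPow_sub_zero (f x) (g x)).symm
  have hint_fg' : Integrable (fun x => lpPow p ((f - g) x) 0) L := by
    simpa only [hfg_eq] using hint_fg
  set a : ℝ := (NNp p L (f - g)).toReal with hadef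
  have ha0 : 0 ≤ a := ENNReal.toReal_nonneg
  have haI : a ^ p = I := by
    rw [hadef, NNp_toReal_rpow hp0 hint_fg', hIdef]
    exact integral_congr_ae (Eventually.of_forall fun x => hfg_eq x)
  have hNfg_ne : NNp p L (f - g) ≠ ⊤ := NNp_ne_top hp0 hint_fg'
  have hFmeaslam : ∀ lam : ℝ, Measurable (fun z : (Fin d → ℝ) × (Fin d → ℝ) =>
      (1 / lam) * lpPow p z.1 z.2 + lpPow p (f z.1) (g z.2)) := fun lam =>
    ((measurable_lpPow p measurable_fst measurable_snd).const_mul _).add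
      (measurable_lpPow p (hf.comp measurable_fst) (hg.comp measurable_snd))
  have hSmem : ∀ lam : ℝ, I ∈ {r : ℝ | ∃ π ∈ Couplings L L,
      r = ∫ z : (Fin d → ℝ) × (Fin d → ℝ),
        ((1 / lam) * lpPow p z.1 z.2 + lpPow p (f z.1) (g z.2)) ∂π} := by
    intro lam
    refine ⟨L.map (fun x => (x, x)), ⟨?_, ?_⟩, ?_⟩
    · rw [Measure.fst_map_prodMk measurable_id', Measure.map_id']
    · rw [Measure.snd_map_prodMk measurable_id', Measure.map_id']
    · rw [integral_map (measurable_id'.prodMk measurable_id').aemeasurable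
        (hFmeaslam lam).aestronglyMeasurable]
      simp only [lpPow_self hpne, mul_zero, zero_add]
      exact hIdef
  have hS_nonneg : ∀ lam : ℝ, 0 < lam → ∀ r ∈ {r : ℝ | ∃ π ∈ Couplings L L,
      r = ∫ z : (Fin d → ℝ) × (Fin d → ℝ),
        ((1 / lam) * lpPow p z.1 z.2 + lpPow p (f z.1) (g z.2)) ∂π}, (0:ℝ) ≤ r := by
    rintro lam hlam r ⟨π, _, rfl⟩
    apply integral_nonneg
    intro z
    exact add_nonneg (mul_nonneg (by positivity) (lpPow_nonneg p _ _)) (lpPow_nonneg p _ _)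
  have key : Tendsto (fun lam => TLpPow p lam f g L L) (nhdsWithin 0 (Set.Ioi 0)) (nhds I) := by
    rw [Metric.tendsto_nhdsWithin_nhds]
    intro ε hε
    have hcontp : ContinuousAt (fun s : ℝ => s ^ p) a :=
      Real.continuousAt_rpow_const _ _ (Or.inr hp0.le)
    rw [Metric.continuousAt_iff] at hcontp
    obtain ⟨β₀, hβ₀pos, hβ₀⟩ := hcontp (ε / 2) (by linarith)
    have hgmem : MemLp g (ENNReal.ofReal p) L := memLp_of_lpPow_integrable hp hg hgp
    haveI : L.Regular := by infer_instance
    set cm : ℝ := (m : ℝ) ^ (1 / p) with hcm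
    have hcm0 : 0 ≤ cm := Real.rpow_nonneg (Nat.cast_nonneg m) _
    set γ : ℝ := β₀ / (8 * (cm + 1)) with hγdef
    have hγpos : 0 < γ := by positivity
    obtain ⟨h, hhsupp, hhlp, hhcont, hhmem⟩ :=
      hgmem.exists_hasCompactSupport_eLpNorm_sub_le ENNReal.ofReal_ne_top
        (ε := ENNReal.ofReal γ)
        (by simp only [ne_eq, ENNReal.ofReal_eq_zero, not_le]; exact hγpos)
    have hhmeas : Measurable h := hhcont.measurable
    have hcmE : ((m : ℝ≥0∞)) ^ (1 / p) = ENNReal.ofReal cm := by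
      rw [show ((m : ℝ≥0∞)) = ENNReal.ofReal (m : ℝ) by simp,
        ENNReal.ofReal_rpow_of_nonneg (Nat.cast_nonneg m) (by positivity), hcm]
    have hgh : NNp p L (g - h) ≤ ENNReal.ofReal (β₀ / 8) := by
      calc NNp p L (g - h)
          ≤ (m : ℝ≥0∞) ^ (1 / p) * eLpNorm (g - h) (ENNReal.ofReal p) L :=
            NNp_le_eLpNorm hp _
        _ ≤ ENNReal.ofReal cm * ENNReal.ofReal γ := by
            rw [hcmE]
            exact mul_le_mul_right hhlp _
        _ ≤ ENNReal.ofReal (β₀ / 8) := by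
            rw [← ENNReal.ofReal_mul hcm0]
            apply ENNReal.ofReal_le_ofReal
            rw [hγdef]
            have hcm1 : (0:ℝ) < cm + 1 := by linarith
            have hD0 : (0:ℝ) ≤ β₀ / (8 * (cm + 1)) := by positivity
            have he : (cm + 1) * (β₀ / (8 * (cm + 1))) = β₀ / 8 := by
              field_simp
            nlinarith [hD0]
    obtain ⟨M₀, hM₀⟩ := hhsupp.exists_bound_of_continuous hhcont
    set M : ℝ := |M₀| with hMdef
    have hM : ∀ x, ‖h x‖ ≤ M := fun x => (hM₀ x).trans (le_abs_self _)
    have hM0 : 0 ≤ M := abs_nonneg _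
    have h2M0 : (0:ℝ) ≤ 2 * M := by linarith
    set η₂ : ℝ := β₀ / (4 * (cm + 1)) with hη₂def
    have hη₂pos : 0 < η₂ := by positivity
    set η₃ : ℝ := β₀ / (8 * (cm * (2 * M) + 1)) with hη₃def
    have hη₃pos : 0 < η₃ := by
      have : (0:ℝ) < cm * (2 * M) + 1 := by nlinarith
      positivity
    have huc : UniformContinuous h := hhsupp.uniformContinuous_of_continuous hhcont
    rw [Metric.uniformContinuous_iff] at huc
    obtain ⟨δ₀, hδ₀pos, hδ₀⟩ := huc η₂ hη₂pos
    set δ' : ℝ := δ₀ / 2 with hδ'def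
    have hδ'pos : 0 < δ' := by positivity
    set t₀ : ℝ := δ' ^ p * η₃ ^ p with ht₀def
    have ht₀pos : 0 < t₀ :=
      mul_pos (Real.rpow_pos_of_pos hδ'pos p) (Real.rpow_pos_of_pos hη₃pos p)
    refine ⟨t₀ / (|I| + 1), by positivity, ?_⟩
    intro lam hlam hdist
    have hlam0 : 0 < lam := hlam
    have hlamlt : lam < t₀ / (|I| + 1) := by
      rwa [Real.dist_eq, sub_zero, abs_of_pos hlam0] at hdist
    have hlb : ∀ r ∈ {r : ℝ | ∃ π ∈ Couplings L L,
        r = ∫ z : (Fin d → ℝ) × (Fin d → ℝ),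
          ((1 / lam) * lpPow p z.1 z.2 + lpPow p (f z.1) (g z.2)) ∂π}, I - ε / 2 ≤ r := by
      rintro r ⟨π, ⟨hπ1, hπ2⟩, rfl⟩
      haveI hπprob : IsProbabilityMeasure π := by
        constructor
        rw [← Measure.fst_univ, hπ1]
        exact measure_univ
      have hmapfst : π.map Prod.fst = L := hπ1
      have hmapsnd : π.map Prod.snd = L := hπ2
      have hae1 : ∀ᵐ z : (Fin d → ℝ) × (Fin d → ℝ) ∂π, z.1 ∈ Ω := by
        apply ae_iff.mpr
        have he : {z : (Fin d → ℝ) × (Fin d → ℝ) | ¬ z.1 ∈ Ω} = Prod.fst ⁻¹' Ωᶜ := rfl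
        rw [he, ← Measure.fst_apply hΩm.compl, hπ1]
        exact hLcompl
      have hae2 : ∀ᵐ z : (Fin d → ℝ) × (Fin d → ℝ) ∂π, z.2 ∈ Ω := by
        apply ae_iff.mpr
        have he : {z : (Fin d → ℝ) × (Fin d → ℝ) | ¬ z.2 ∈ Ω} = Prod.snd ⁻¹' Ωᶜ := rfl
        rw [he, ← Measure.snd_apply hΩm.compl, hπ2]
        exact hLcompl
      have hintf : Integrable (fun z : (Fin d → ℝ) × (Fin d → ℝ) => lpPow p (f z.1) 0) π := by
        exact (integrable_map_measure
          (f := Prod.fst) (g := fun x => lpPow p (f x) 0) (μ := π)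
          ((measurable_lpPow p hf measurable_const).aestronglyMeasurable)
          measurable_fst.aemeasurable).mp (by rw [hmapfst]; exact hfp)
      have hintg2 : Integrable (fun z : (Fin d → ℝ) × (Fin d → ℝ) => lpPow p (g z.2) 0) π := by
        exact (integrable_map_measure
          (f := Prod.snd) (g := fun x => lpPow p (g x) 0) (μ := π)
          ((measurable_lpPow p hg measurable_const).aestronglyMeasurable)
          measurable_snd.aemeasurable).mp (by rw [hmapsnd]; exact hgp)
      have hintF : Integrable (fun z : (Fin d → ℝ) × (Fin d → ℝ) =>
          lpPow p (f z.1) (g z.2)) π := by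
        apply Integrable.mono' ((hintf.add hintg2).const_mul (2 ^ p))
          ((measurable_lpPow p (hf.comp measurable_fst)
            (hg.comp measurable_snd)).aestronglyMeasurable)
        apply Eventually.of_forall
        intro z
        rw [Real.norm_eq_abs, abs_of_nonneg (lpPow_nonneg p _ _)]
        exact lpPow_le_two_rpow hp0.le _ _
      obtain ⟨R₀, hR₀⟩ := isBounded_iff_forall_norm_le.mp hΩb
      set R : ℝ := |R₀| with hRdef
      have hR : ∀ x ∈ Ω, ‖x‖ ≤ R := fun x hx => (hR₀ x hx).trans (le_abs_self _)
      have hcbound : ∀ᵐ z : (Fin d → ℝ) × (Fin d → ℝ) ∂π,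
          ‖lpPow p z.1 z.2‖ ≤ (d : ℝ) * (2 * R) ^ p := by
        filter_upwards [hae1, hae2] with z h1 h2
        rw [Real.norm_eq_abs, abs_of_nonneg (lpPow_nonneg p _ _)]
        calc lpPow p z.1 z.2 ≤ ∑ _i : Fin d, (2 * R) ^ p := by
              apply Finset.sum_le_sum
              intro i _
              apply Real.rpow_le_rpow (abs_nonneg _) ?_ hp0.le
              calc |z.1 i - z.2 i| ≤ |z.1 i| + |z.2 i| := abs_sub _ _
                _ ≤ ‖z.1‖ + ‖z.2‖ := by
                    apply add_le_add
                    · rw [← Real.norm_eq_abs]; exact norm_le_pi_norm z.1 i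
                    · rw [← Real.norm_eq_abs]; exact norm_le_pi_norm z.2 i
                _ ≤ R + R := add_le_add (hR _ h1) (hR _ h2)
                _ = 2 * R := by ring
          _ = (d : ℝ) * (2 * R) ^ p := by
              rw [Finset.sum_const, Finset.card_univ, Fintype.card_fin, nsmul_eq_mul]
      have hintc : Integrable (fun z : (Fin d → ℝ) × (Fin d → ℝ) => lpPow p z.1 z.2) π :=
        Integrable.mono' (integrable_const _)
          ((measurable_lpPow p measurable_fst measurable_snd).aestronglyMeasurable) hcbound
      set T : ℝ := ∫ z : (Fin d → ℝ) × (Fin d → ℝ), lpPow p z.1 z.2 ∂π with hTdef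
      have hT0 : 0 ≤ T := integral_nonneg fun z => lpPow_nonneg p _ _
      have hrsplit : (∫ z : (Fin d → ℝ) × (Fin d → ℝ),
          ((1 / lam) * lpPow p z.1 z.2 + lpPow p (f z.1) (g z.2)) ∂π)
          = (1 / lam) * T + ∫ z : (Fin d → ℝ) × (Fin d → ℝ), lpPow p (f z.1) (g z.2) ∂π := by
        rw [integral_add (hintc.const_mul _) hintF, integral_const_mul (1 / lam)]
      have hintF0 : 0 ≤ ∫ z : (Fin d → ℝ) × (Fin d → ℝ), lpPow p (f z.1) (g z.2) ∂π :=
        integral_nonneg fun z => lpPow_nonneg p _ _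
      rw [hrsplit]
      by_cases hcase : T ≤ t₀
      · -- small transport cost
        set w1 : (Fin d → ℝ) × (Fin d → ℝ) → Fin m → ℝ := fun z => f z.1 - g z.2 with hw1def
        set w2 : (Fin d → ℝ) × (Fin d → ℝ) → Fin m → ℝ := fun z => g z.2 - h z.2 with hw2def
        set w3 : (Fin d → ℝ) × (Fin d → ℝ) → Fin m → ℝ := fun z => h z.2 - h z.1 with hw3def
        set w4 : (Fin d → ℝ) × (Fin d → ℝ) → Fin m → ℝ := fun z => h z.1 - g z.1 with hw4def
        have hw1meas : Measurable w1 := (hf.comp measurable_fst).sub (hg.comp measurable_snd)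
        have hw2meas : Measurable w2 := (hg.comp measurable_snd).sub (hhmeas.comp measurable_snd)
        have hw3meas : Measurable w3 := (hhmeas.comp measurable_snd).sub (hhmeas.comp measurable_fst)
        have hw4meas : Measurable w4 := (hhmeas.comp measurable_fst).sub (hg.comp measurable_fst)
        have hw1int : Integrable (fun z : (Fin d → ℝ) × (Fin d → ℝ) =>
            lpPow p (w1 z) 0) π := by
          simp only [hw1def]
          simpa only [← lpPow_sub_zero] using hintF
        set s : ℝ := (NNp p π w1).toReal with hsdef
        have hs0 : 0 ≤ s := ENNReal.toReal_nonneg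
        have hsp : s ^ p = ∫ z : (Fin d → ℝ) × (Fin d → ℝ), lpPow p (f z.1) (g z.2) ∂π := by
          rw [hsdef, NNp_toReal_rpow hp0 hw1int]
          exact integral_congr_ae (Eventually.of_forall fun z => (lpPow_sub_zero _ _).symm)
        have hs_ne : NNp p π w1 ≠ ⊤ := NNp_ne_top hp0 hw1int
        set A : Set ((Fin d → ℝ) × (Fin d → ℝ)) := {z | dist z.1 z.2 ≤ δ'} with hAdef
        have hAmeas : MeasurableSet A :=
          (isClosed_le (continuous_fst.dist continuous_snd) continuous_const).measurableSet
        have hAc : π Aᶜ ≤ ENNReal.ofReal (η₃ ^ p) := by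
          have hsub : Aᶜ ⊆ {z : (Fin d → ℝ) × (Fin d → ℝ) | δ' ^ p ≤ lpPow p z.1 z.2} := by
            intro z hz
            simp only [hAdef, Set.mem_compl_iff, Set.mem_setOf_eq, not_le] at hz
            have hex : ∃ i, δ' < |z.1 i - z.2 i| := by
              by_contra hcon
              push_neg at hcon
              have hle : dist z.1 z.2 ≤ δ' := by
                rw [dist_pi_le_iff hδ'pos.le]
                intro i
                rw [Real.dist_eq]
                exact hcon i
              linarith
            obtain ⟨i, hi⟩ := hex
            have h1 : δ' ^ p ≤ |z.1 i - z.2 i| ^ p :=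
              Real.rpow_le_rpow hδ'pos.le hi.le hp0.le
            have h2 : |z.1 i - z.2 i| ^ p ≤ lpPow p z.1 z.2 :=
              Finset.single_le_sum (f := fun j => |z.1 j - z.2 j| ^ p)
                (fun j _ => Real.rpow_nonneg (abs_nonneg _) _) (Finset.mem_univ i)
            exact le_trans h1 h2
          have hmark := mul_meas_ge_le_integral_of_nonneg
            (Eventually.of_forall fun z : (Fin d → ℝ) × (Fin d → ℝ) =>
              lpPow_nonneg p z.1 z.2) hintc (δ' ^ p)
          have hδp : (0:ℝ) < δ' ^ p := Real.rpow_pos_of_pos hδ'pos p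
          have hπS : (π {z : (Fin d → ℝ) × (Fin d → ℝ) |
              δ' ^ p ≤ lpPow p z.1 z.2}).toReal ≤ η₃ ^ p := by
            have h3 : δ' ^ p * (π {z : (Fin d → ℝ) × (Fin d → ℝ) |
                δ' ^ p ≤ lpPow p z.1 z.2}).toReal ≤ δ' ^ p * η₃ ^ p := by
              calc δ' ^ p * (π _).toReal ≤ T := hmark
                _ ≤ t₀ := hcase
                _ = δ' ^ p * η₃ ^ p := ht₀def
            exact le_of_mul_le_mul_left h3 hδp
          calc π Aᶜ ≤ π {z : (Fin d → ℝ) × (Fin d → ℝ) | δ' ^ p ≤ lpPow p z.1 z.2} :=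
                measure_mono hsub
            _ ≤ ENNReal.ofReal (η₃ ^ p) := by
                rw [ENNReal.le_ofReal_iff_toReal_le (measure_ne_top π _)
                  (Real.rpow_nonneg hη₃pos.le p)]
                exact hπS
        -- bounds on the four pieces
        have he0 : NNp p L (f - g) = NNp p π (fun z : (Fin d → ℝ) × (Fin d → ℝ) =>
            (f - g) z.1) := by
          have h1 := NNp_map (p := p) π measurable_fst (hf.sub hg)
          rw [hmapfst] at h1
          exact h1
        have hw2b : NNp p π w2 ≤ ENNReal.ofReal (β₀ / 8) := by
          have h1 := NNp_map (p := p) π measurable_snd (hg.sub hhmeas)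
          rw [hmapsnd] at h1
          calc NNp p π w2 = NNp p L (g - h) := h1.symm
            _ ≤ ENNReal.ofReal (β₀ / 8) := hgh
        have hw4b : NNp p π w4 ≤ ENNReal.ofReal (β₀ / 8) := by
          have h1 := NNp_map (p := p) π measurable_fst (hhmeas.sub hg)
          rw [hmapfst] at h1
          have h2 : NNp p L (h - g) = NNp p L (g - h) := by
            apply NNp_congr
            intro x
            have he : (h - g) x = -((g - h) x) := by
              simp [Pi.sub_apply, Pi.neg_apply, neg_sub]
            rw [he, lpPow_neg]
          calc NNp p π w4 = NNp p L (h - g) := h1.symm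
            _ = NNp p L (g - h) := h2
            _ ≤ ENNReal.ofReal (β₀ / 8) := hgh
        have hw3A : NNp p π (A.indicator w3) ≤ ENNReal.ofReal (cm * η₂) := by
          have hb : ∀ z ∈ A, lpPow p (w3 z) 0 ≤ (m:ℝ) * η₂ ^ p := by
            intro z hz
            have hd : dist z.2 z.1 < δ₀ := by
              rw [dist_comm]
              calc dist z.1 z.2 ≤ δ' := hz
                _ < δ₀ := by rw [hδ'def]; linarith
            have hnorm : ‖h z.2 - h z.1‖ ≤ η₂ := by
              rw [← dist_eq_norm]
              exact (hδ₀ hd).le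
            rw [lpPow_zero_eq]
            calc (∑ i, |(w3 z) i| ^ p) ≤ ∑ _i : Fin m, η₂ ^ p := by
                  apply Finset.sum_le_sum
                  intro i _
                  apply Real.rpow_le_rpow (abs_nonneg _) ?_ hp0.le
                  rw [← Real.norm_eq_abs]
                  exact (norm_le_pi_norm (w3 z) i).trans hnorm
              _ = (m:ℝ) * η₂ ^ p := by
                  rw [Finset.sum_const, Finset.card_univ, Fintype.card_fin, nsmul_eq_mul]
          calc NNp p π (A.indicator w3)
              ≤ ENNReal.ofReal ((m:ℝ) * η₂ ^ p) ^ (1/p) * π A ^ (1/p) :=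
                NNp_indicator_le hp0 hAmeas hb
            _ ≤ ENNReal.ofReal ((m:ℝ) * η₂ ^ p) ^ (1/p) * 1 := by
                apply mul_le_mul_right
                calc π A ^ (1/p) ≤ (1:ℝ≥0∞) ^ (1/p) :=
                      ENNReal.rpow_le_rpow prob_le_one (by positivity)
                  _ = 1 := ENNReal.one_rpow _
            _ = ENNReal.ofReal (cm * η₂) := by
                rw [mul_one, ENNReal.ofReal_rpow_of_nonneg
                  (mul_nonneg (Nat.cast_nonneg m) (Real.rpow_nonneg hη₂pos.le p))
                  (by positivity)]
                congr 1
                rw [Real.mul_rpow (Nat.cast_nonneg m) (Real.rpow_nonneg hη₂pos.le p), hcm,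
                  one_div, Real.rpow_rpow_inv hη₂pos.le hp0.ne']
        have hw3Ac : NNp p π (Aᶜ.indicator w3)
            ≤ ENNReal.ofReal (cm * (2 * M)) * ENNReal.ofReal η₃ := by
          have hb : ∀ z ∈ Aᶜ, lpPow p (w3 z) 0 ≤ (m:ℝ) * (2 * M) ^ p := by
            intro z _
            rw [lpPow_zero_eq]
            calc (∑ i, |(w3 z) i| ^ p) ≤ ∑ _i : Fin m, (2 * M) ^ p := by
                  apply Finset.sum_le_sum
                  intro i _
                  apply Real.rpow_le_rpow (abs_nonneg _) ?_ hp0.le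
                  rw [← Real.norm_eq_abs]
                  calc ‖(w3 z) i‖ ≤ ‖w3 z‖ := norm_le_pi_norm _ i
                    _ ≤ ‖h z.2‖ + ‖h z.1‖ := norm_sub_le _ _
                    _ ≤ M + M := add_le_add (hM _) (hM _)
                    _ = 2 * M := by ring
              _ = (m:ℝ) * (2 * M) ^ p := by
                  rw [Finset.sum_const, Finset.card_univ, Fintype.card_fin, nsmul_eq_mul]
          calc NNp p π (Aᶜ.indicator w3)
              ≤ ENNReal.ofReal ((m:ℝ) * (2 * M) ^ p) ^ (1/p) * π Aᶜ ^ (1/p) :=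
                NNp_indicator_le hp0 hAmeas.compl hb
            _ ≤ ENNReal.ofReal (cm * (2 * M)) * ENNReal.ofReal η₃ := by
                apply mul_le_mul'
                · rw [ENNReal.ofReal_rpow_of_nonneg
                    (mul_nonneg (Nat.cast_nonneg m) (Real.rpow_nonneg h2M0 p))
                    (by positivity)]
                  apply ENNReal.ofReal_le_ofReal
                  rw [Real.mul_rpow (Nat.cast_nonneg m) (Real.rpow_nonneg h2M0 p), hcm,
                    one_div, Real.rpow_rpow_inv h2M0 hp0.ne']
                · calc π Aᶜ ^ (1/p) ≤ ENNReal.ofReal (η₃ ^ p) ^ (1/p) :=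
                      ENNReal.rpow_le_rpow hAc (by positivity)
                    _ = ENNReal.ofReal η₃ := by
                      rw [ENNReal.ofReal_rpow_of_nonneg (Real.rpow_nonneg hη₃pos.le p)
                        (by positivity), one_div, Real.rpow_rpow_inv hη₃pos.le hp0.ne']
        have hw3b : NNp p π w3 ≤ ENNReal.ofReal (cm * η₂ + cm * (2 * M) * η₃) := by
          have hdecomp : w3 = A.indicator w3 + Aᶜ.indicator w3 :=
            (Set.indicator_self_add_compl A w3).symm
          calc NNp p π w3 = NNp p π (A.indicator w3 + Aᶜ.indicator w3) := by
                rw [← hdecomp]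
            _ ≤ NNp p π (A.indicator w3) + NNp p π (Aᶜ.indicator w3) :=
                NNp_add_le hp (hw3meas.indicator hAmeas) (hw3meas.indicator hAmeas.compl)
            _ ≤ ENNReal.ofReal (cm * η₂) + ENNReal.ofReal (cm * (2 * M)) * ENNReal.ofReal η₃ :=
                add_le_add hw3A hw3Ac
            _ = ENNReal.ofReal (cm * η₂ + cm * (2 * M) * η₃) := by
                rw [← ENNReal.ofReal_mul (mul_nonneg hcm0 h2M0),
                  ← ENNReal.ofReal_add (mul_nonneg hcm0 hη₂pos.le)
                    (mul_nonneg (mul_nonneg hcm0 h2M0) hη₃pos.le)]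
        -- assemble the chain
        set β : ℝ := β₀ / 8 + (cm * η₂ + cm * (2 * M) * η₃ + β₀ / 8) with hβdef
        have hβ0 : 0 ≤ β := by
          have := mul_nonneg hcm0 hη₂pos.le
          have := mul_nonneg (mul_nonneg hcm0 h2M0) hη₃pos.le
          rw [hβdef]; linarith
        have hβlt : β < β₀ := by
          have hX : cm * η₂ ≤ β₀ / 4 := by
            have h1 : (cm + 1) * η₂ = β₀ / 4 := by
              rw [hη₂def]
              field_simp
            nlinarith [hη₂pos.le]
          have hY : cm * (2 * M) * η₃ ≤ β₀ / 8 := by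
            have h1 : (cm * (2 * M) + 1) * η₃ = β₀ / 8 := by
              rw [hη₃def]
              have hne : cm * (2 * M) + 1 ≠ 0 := by nlinarith
              field_simp
            nlinarith [hη₃pos.le]
          rw [hβdef]; linarith
        have hdec : (fun z : (Fin d → ℝ) × (Fin d → ℝ) => (f - g) z.1)
            = w1 + (w2 + (w3 + w4)) := by
          funext z
          simp only [Pi.add_apply, Pi.sub_apply, hw1def, hw2def, hw3def, hw4def]
          abel
        have htri : NNp p L (f - g) ≤ NNp p π w1 + ENNReal.ofReal β := by
          calc NNp p L (f - g)
              = NNp p π (w1 + (w2 + (w3 + w4))) := by rw [he0, hdec]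
            _ ≤ NNp p π w1 + NNp p π (w2 + (w3 + w4)) :=
                NNp_add_le hp hw1meas (hw2meas.add (hw3meas.add hw4meas))
            _ ≤ NNp p π w1 + (NNp p π w2 + NNp p π (w3 + w4)) :=
                add_le_add_right (NNp_add_le hp hw2meas (hw3meas.add hw4meas)) _
            _ ≤ NNp p π w1 + (NNp p π w2 + (NNp p π w3 + NNp p π w4)) :=
                add_le_add_right (add_le_add_right (NNp_add_le hp hw3meas hw4meas) _) _
            _ ≤ NNp p π w1 + (ENNReal.ofReal (β₀ / 8)
                + (ENNReal.ofReal (cm * η₂ + cm * (2 * M) * η₃) + ENNReal.ofReal (β₀ / 8))) := by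
                apply add_le_add_right
                exact add_le_add hw2b (add_le_add hw3b hw4b)
            _ = NNp p π w1 + ENNReal.ofReal β := by
                have hx1 : (0:ℝ) ≤ cm * η₂ + cm * (2 * M) * η₃ :=
                  add_nonneg (mul_nonneg hcm0 hη₂pos.le)
                    (mul_nonneg (mul_nonneg hcm0 h2M0) hη₃pos.le)
                have hx2 : (0:ℝ) ≤ β₀ / 8 := by linarith
                rw [← ENNReal.ofReal_add hx1 hx2,
                  ← ENNReal.ofReal_add hx2 (add_nonneg hx1 hx2), hβdef]
        have hareal : a ≤ s + β := by
          have h1 : (NNp p L (f - g)).toReal ≤ (NNp p π w1 + ENNReal.ofReal β).toReal := by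
            apply ENNReal.toReal_mono _ htri
            exact ENNReal.add_ne_top.mpr ⟨hs_ne, ENNReal.ofReal_ne_top⟩
          rw [ENNReal.toReal_add hs_ne ENNReal.ofReal_ne_top,
            ENNReal.toReal_ofReal hβ0] at h1
          exact h1
        have hlamT : 0 ≤ (1 / lam) * T := mul_nonneg (by positivity) hT0
        rcases le_or_gt a s with hsa | hsa
        · have hIs : I ≤ s ^ p := by
            rw [← haI]
            exact Real.rpow_le_rpow ha0 hsa hp0.le
          rw [hsp] at hIs
          linarith
        · have hdist2 : dist s a < β₀ := by
            rw [Real.dist_eq, abs_of_nonpos (by linarith)]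
            linarith
          have hd3 := hβ₀ hdist2
          rw [Real.dist_eq, abs_sub_lt_iff] at hd3
          have : I - ε / 2 ≤ s ^ p := by
            have := hd3.2
            rw [haI] at this
            linarith
          rw [hsp] at this
          linarith
      · -- large transport cost
        push_neg at hcase
        have h1lam : 1 / (t₀ / (|I| + 1)) ≤ 1 / lam :=
          one_div_le_one_div_of_le hlam0 hlamlt.le
        have h2 : (|I| + 1) / t₀ * t₀ ≤ (1 / lam) * T := by
          calc (|I| + 1) / t₀ * t₀ = (1 / (t₀ / (|I| + 1))) * t₀ := by
                rw [one_div_div]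
            _ ≤ (1 / lam) * t₀ := mul_le_mul_of_nonneg_right h1lam ht₀pos.le
            _ ≤ (1 / lam) * T := mul_le_mul_of_nonneg_left hcase.le (by positivity)
        rw [div_mul_cancel₀ _ ht₀pos.ne'] at h2
        have hIabs : I ≤ |I| + 1 := by
          have := le_abs_self I; linarith
        linarith
    have hub : TLpPow p lam f g L L ≤ I :=
      csInf_le ⟨0, fun r hr => hS_nonneg lam hlam0 r hr⟩ (hSmem lam)
    have hlb' : I - ε / 2 ≤ TLpPow p lam f g L L :=
      le_csInf ⟨I, hSmem lam⟩ hlb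
    rw [Real.dist_eq, abs_sub_lt_iff]
    constructor <;> linarith
  have hcont : ContinuousAt (fun x : ℝ => x ^ (1 / p)) I :=
    Real.continuousAt_rpow_const _ _ (Or.inr (by positivity))
  have hfinal := hcont.tendsto.comp key
  simpa only [TLpDist, Function.comp_def] using hfinal
end
end

section
/- Let Ω ⊆ ℝ^d be a bounded open set, L the normalized Lebesgue measure on Ω, and f, g ∈ L^1(L; ℝ^m), at least one of which is Lipschitz with Lipschitz constant κ. Then for every λ ∈ (0, 1/κ), d_{TL^1_λ}((f,L),(g,L)) = ‖f−g‖_{L^1(L)}. -/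
open MeasureTheory Filter

noncomputable section

/- If `f` is `κ`-Lipschitz and `κ ≤ 1/λ`, the triangle inequality gives, for every pair
`(x, y)`, `|f(y) - g(y)|₁ ≤ (1/λ)|x - y|₁ + |f(x) - g(y)|₁`. Integrating against any
coupling `π` and using that its second marginal is `μ` bounds the transport cost below by
`‖f - g‖_{L¹(μ)}`, and the diagonal coupling `x ↦ (x, x)` attains this value (symmetrically
if `g` is Lipschitz). -/

section LpPowOne

variable {n : ℕ}

lemma lpPow_one_eq (x y : Fin n → ℝ) : lpPow 1 x y = ∑ i, |x i - y i| := by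
  simp [lpPow]

lemma lpPow_one_nonneg (x y : Fin n → ℝ) : 0 ≤ lpPow 1 x y := by
  rw [lpPow_one_eq]; positivity

lemma lpPow_one_self (x : Fin n → ℝ) : lpPow 1 x x = 0 := by
  simp [lpPow_one_eq]

lemma lpPow_one_comm (x y : Fin n → ℝ) : lpPow 1 x y = lpPow 1 y x := by
  simp only [lpPow_one_eq, abs_sub_comm]

lemma lpPow_one_triangle (x y z : Fin n → ℝ) :
    lpPow 1 x z ≤ lpPow 1 x y + lpPow 1 y z := by
  simp only [lpPow_one_eq, ← Finset.sum_add_distrib]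
  exact Finset.sum_le_sum fun i _ => abs_sub_le _ _ _

lemma lpPow_one_le_add_zero (x y : Fin n → ℝ) :
    lpPow 1 x y ≤ lpPow 1 x 0 + lpPow 1 y 0 :=
  lpPow_one_comm y 0 ▸ lpPow_one_triangle x 0 y

lemma continuous_lpPow_one_zero : Continuous fun x : Fin n → ℝ => lpPow 1 x 0 := by
  simp only [lpPow_one_eq]
  fun_prop

@[fun_prop]
lemma Measurable.lpPow_one {α : Type*} [MeasurableSpace α] {F G : α → Fin n → ℝ}
    (hF : Measurable F) (hG : Measurable G) : Measurable fun a => lpPow 1 (F a) (G a) := by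
  simp only [lpPow_one_eq]
  fun_prop

lemma integrable_lpPow_one {α : Type*} [MeasurableSpace α] {μ : Measure α}
    {F G : α → Fin n → ℝ} (hF : Measurable F) (hG : Measurable G)
    (hFi : Integrable (fun a => lpPow 1 (F a) 0) μ)
    (hGi : Integrable (fun a => lpPow 1 (G a) 0) μ) :
    Integrable (fun a => lpPow 1 (F a) (G a)) μ := by
  refine (hFi.add hGi).mono' (hF.lpPow_one hG).aestronglyMeasurable ?_
  filter_upwards with a
  rw [Real.norm_of_nonneg (lpPow_one_nonneg _ _)]
  exact lpPow_one_le_add_zero _ _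

end LpPowOne

section Couplings

variable {α β : Type*} [MeasurableSpace α] [MeasurableSpace β]
  {μ : Measure α} {ν : Measure β} {π : Measure (α × β)}

lemma diag_mem_couplings (μ : Measure α) : μ.map (fun x => (x, x)) ∈ Couplings μ μ :=
  ⟨(Measure.fst_map_prodMk (X := id) measurable_id).trans Measure.map_id,
    (Measure.snd_map_prodMk (Y := id) measurable_id).trans Measure.map_id⟩

variable {E : Type*} [NormedAddCommGroup E]

lemma MeasureTheory.Integrable.comp_fst_of_mem_couplings (hπ : π ∈ Couplings μ ν)
    {F : α → E} (hF : Integrable F μ) : Integrable (fun z : α × β => F z.1) π := by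
  rw [← hπ.1] at hF
  exact (integrable_map_measure hF.1 measurable_fst.aemeasurable).mp hF

lemma MeasureTheory.Integrable.comp_snd_of_mem_couplings (hπ : π ∈ Couplings μ ν)
    {G : β → E} (hG : Integrable G ν) : Integrable (fun z : α × β => G z.2) π := by
  rw [← hπ.2] at hG
  exact (integrable_map_measure hG.1 measurable_snd.aemeasurable).mp hG

variable [NormedSpace ℝ E]

lemma integral_comp_fst_of_mem_couplings (hπ : π ∈ Couplings μ ν) {F : α → E}
    (hF : AEStronglyMeasurable F μ) : ∫ z, F z.1 ∂π = ∫ x, F x ∂μ := by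
  rw [← hπ.1] at hF ⊢
  exact (integral_map measurable_fst.aemeasurable hF).symm

lemma integral_comp_snd_of_mem_couplings (hπ : π ∈ Couplings μ ν) {G : β → E}
    (hG : AEStronglyMeasurable G ν) : ∫ z, G z.2 ∂π = ∫ y, G y ∂ν := by
  rw [← hπ.2] at hG ⊢
  exact (integral_map measurable_snd.aemeasurable hG).symm

end Couplings

section TL1

variable {d m : ℕ} {μ ν : Measure (Fin d → ℝ)}
  {π : Measure ((Fin d → ℝ) × (Fin d → ℝ))} {f g : (Fin d → ℝ) → (Fin m → ℝ)}
  {κ c : ℝ}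

lemma integrable_lpPow_one_of_mem_couplings (hπ : π ∈ Couplings μ ν)
    {F G : (Fin d → ℝ) → (Fin m → ℝ)} (hF : Measurable F) (hG : Measurable G)
    (hFi : Integrable (fun x => lpPow 1 (F x) 0) μ)
    (hGi : Integrable (fun y => lpPow 1 (G y) 0) ν) :
    Integrable (fun z => lpPow 1 (F z.1) (G z.2)) π :=
  integrable_lpPow_one (hF.comp measurable_fst) (hG.comp measurable_snd)
    (hFi.comp_fst_of_mem_couplings hπ) (hGi.comp_snd_of_mem_couplings hπ)

lemma lpPow_one_le_of_lipschitz_left (hL : ∀ x y, lpPow 1 (f x) (f y) ≤ κ * lpPow 1 x y)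
    (hκc : κ ≤ c) (x y : Fin d → ℝ) :
    lpPow 1 (f y) (g y) ≤ c * lpPow 1 x y + lpPow 1 (f x) (g y) :=
  calc lpPow 1 (f y) (g y) ≤ lpPow 1 (f y) (f x) + lpPow 1 (f x) (g y) :=
        lpPow_one_triangle _ _ _
    _ ≤ κ * lpPow 1 x y + lpPow 1 (f x) (g y) := by grw [hL, lpPow_one_comm y]
    _ ≤ c * lpPow 1 x y + lpPow 1 (f x) (g y) := by grw [hκc]; exact lpPow_one_nonneg x y

lemma lpPow_one_le_of_lipschitz_right (hL : ∀ x y, lpPow 1 (g x) (g y) ≤ κ * lpPow 1 x y)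
    (hκc : κ ≤ c) (x y : Fin d → ℝ) :
    lpPow 1 (f x) (g x) ≤ c * lpPow 1 x y + lpPow 1 (f x) (g y) :=
  calc lpPow 1 (f x) (g x) ≤ lpPow 1 (f x) (g y) + lpPow 1 (g y) (g x) :=
        lpPow_one_triangle _ _ _
    _ ≤ lpPow 1 (f x) (g y) + κ * lpPow 1 x y := by grw [hL, lpPow_one_comm y]
    _ ≤ c * lpPow 1 x y + lpPow 1 (f x) (g y) := by
      grw [hκc, add_comm]; exact lpPow_one_nonneg x y

theorem TLpPow_one_self_eq_integral_of_lipschitz {lam : ℝ}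
    (hμ : Integrable (fun x => lpPow 1 x 0) μ) (hf : Measurable f) (hg : Measurable g)
    (hfi : Integrable (fun x => lpPow 1 (f x) 0) μ)
    (hgi : Integrable (fun x => lpPow 1 (g x) 0) μ)
    (hLip : (∀ x y, lpPow 1 (f x) (f y) ≤ κ * lpPow 1 x y) ∨
      (∀ x y, lpPow 1 (g x) (g y) ≤ κ * lpPow 1 x y))
    (hlam : 0 < lam) (hlamκ : lam * κ < 1) :
    TLpPow 1 lam f g μ μ = ∫ x, lpPow 1 (f x) (g x) ∂μ := by
  have hκ : κ ≤ 1 / lam := by rw [le_div_iff₀ hlam]; linarith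
  have hfg := integrable_lpPow_one hf hg hfi hgi
  refine IsLeast.csInf_eq ⟨⟨_, diag_mem_couplings μ, ?_⟩, ?_⟩
  · rw [integral_map (by fun_prop) (by fun_prop)]
    simp [lpPow_one_self]
  rintro _ ⟨π, hπ, rfl⟩
  have hcost :=
    ((integrable_lpPow_one_of_mem_couplings hπ measurable_id measurable_id hμ hμ).const_mul
      (1 / lam)).add (integrable_lpPow_one_of_mem_couplings hπ hf hg hfi hgi)
  rcases hLip with hL | hL
  · calc ∫ x, lpPow 1 (f x) (g x) ∂μ = ∫ z, lpPow 1 (f z.2) (g z.2) ∂π :=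
          (integral_comp_snd_of_mem_couplings hπ hfg.1).symm
      _ ≤ _ := integral_mono (hfg.comp_snd_of_mem_couplings hπ) hcost fun z =>
          lpPow_one_le_of_lipschitz_left hL hκ z.1 z.2
  · calc ∫ x, lpPow 1 (f x) (g x) ∂μ = ∫ z, lpPow 1 (f z.1) (g z.1) ∂π :=
          (integral_comp_fst_of_mem_couplings hπ hfg.1).symm
      _ ≤ _ := integral_mono (hfg.comp_fst_of_mem_couplings hπ) hcost fun z =>
          lpPow_one_le_of_lipschitz_right hL hκ z.1 z.2

end TL1

lemma integrable_lpPow_one_zero_nLeb {d : ℕ} {Ω : Set (Fin d → ℝ)} (hΩo : IsOpen Ω)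
    (hΩb : Bornology.IsBounded Ω) (hΩne : Ω.Nonempty) :
    Integrable (fun x => lpPow 1 x 0) (nLeb Ω) := by
  have hΩ : IntegrableOn (fun x : Fin d → ℝ => lpPow 1 x 0) Ω :=
    (continuous_lpPow_one_zero.continuousOn.integrableOn_compact
      hΩb.isCompact_closure).mono_set subset_closure
  exact hΩ.smul_measure (ENNReal.inv_ne_top.mpr (hΩo.measure_pos volume hΩne).ne')

theorem tl1_eq_L1_of_small_lambda_general
    {d m : ℕ}
    (Ω : Set (Fin d → ℝ)) (hΩo : IsOpen Ω) (hΩb : Bornology.IsBounded Ω)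
    (hΩne : Ω.Nonempty)
    (f g : (Fin d → ℝ) → (Fin m → ℝ))
    (hf : Measurable f) (hg : Measurable g)
    (hfp : Integrable (fun x => lpPow 1 (f x) 0) (nLeb Ω))
    (hgp : Integrable (fun x => lpPow 1 (g x) 0) (nLeb Ω))
    (κ : ℝ)
    (hLip : (∀ x y, lpPow 1 (f x) (f y) ≤ κ * lpPow 1 x y) ∨
            (∀ x y, lpPow 1 (g x) (g y) ≤ κ * lpPow 1 x y))
    (lam : ℝ) (hlam : 0 < lam) (hlamκ : lam * κ < 1) :
    TLpPow 1 lam f g (nLeb Ω) (nLeb Ω) = ∫ x, lpPow 1 (f x) (g x) ∂(nLeb Ω) :=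
  TLpPow_one_self_eq_integral_of_lipschitz (integrable_lpPow_one_zero_nLeb hΩo hΩb hΩne) hf hg
    hfp hgp hLip hlam hlamκ

/-- For `p = 1`, if at least one of `f`, `g` is Lipschitz with constant `κ` (with respect
to the ℓ¹ norms), then for every `λ ∈ (0, 1/κ)` the `TL¹_λ` distance equals the `L¹`
distance: `d_{TL¹_λ}((f,L),(g,L)) = ‖f−g‖_{L¹(L)}`. -/
theorem tl1_eq_L1_of_small_lambda
    {d m : ℕ}
    (Ω : Set (Fin d → ℝ)) (hΩo : IsOpen Ω) (hΩb : Bornology.IsBounded Ω)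
    (hΩne : Ω.Nonempty)
    (f g : (Fin d → ℝ) → (Fin m → ℝ))
    (hf : Measurable f) (hg : Measurable g)
    (hfp : Integrable (fun x => lpPow 1 (f x) 0) (nLeb Ω))
    (hgp : Integrable (fun x => lpPow 1 (g x) 0) (nLeb Ω))
    (κ : ℝ) (hκ : 0 ≤ κ)
    (hLip : (∀ x y, lpPow 1 (f x) (f y) ≤ κ * lpPow 1 x y) ∨
            (∀ x y, lpPow 1 (g x) (g y) ≤ κ * lpPow 1 x y))
    (lam : ℝ) (hlam : 0 < lam) (hlamκ : lam * κ < 1) :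
    TLpPow 1 lam f g (nLeb Ω) (nLeb Ω) = ∫ x, lpPow 1 (f x) (g x) ∂(nLeb Ω) :=
  tl1_eq_L1_of_small_lambda_general Ω hΩo hΩb hΩne f g hf hg hfp hgp κ hLip lam hlam hlamκ
end
end

section
/- The TL^p_λ distance equals the optimal transport cost between the measures raised onto the graphs: for Borel measurable f : Ω → ℝ^m, g : Ω → ℝ^m with f ∈ L^p(μ), g ∈ L^p(ν), letting μ̃ = (id, f)_#μ and ν̃ = (id, g)_#ν be the pushforwards of μ and ν onto Ω×ℝ^m by x ↦ (x, f(x)) and y ↦ (y, g(y)) respectively, and letting c_λ((x,u),(y,v)) = (1/λ)|x−y|_p^p + |u−v|_p^p, one has d_{TL^p_λ}((f,μ),(g,ν))^p = inf_{γ ∈ Π(μ̃, ν̃)} ∫ c_λ(z, w) dγ(z, w). -/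
open MeasureTheory Filter

noncomputable section

/-! The lift `(x, y) ↦ ((x, f x), (y, g y))` sends couplings of `μ, ν` to couplings of the graph
measures, and the projection `((x, u), (y, v)) ↦ (x, y)` sends them back. A coupling of the graph
measures is concentrated on the product of the two graphs, where lift and projection are mutually
inverse, so both maps carry cost integrals to cost integrals and the two sets of costs coincide. -/

@[fun_prop]
lemma Measurable.lpPow {α : Type*} [MeasurableSpace α] (p : ℝ) {n : ℕ}
    {F G : α → Fin n → ℝ} (hF : Measurable F) (hG : Measurable G) :
    Measurable fun a => lpPow p (F a) (G a) :=
  Finset.measurable_sum _ fun _ _ => (hF.eval.sub hG.eval).abs.pow_const p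

section GraphCouplings

variable {α β γ δ : Type*} [MeasurableSpace α] [MeasurableSpace β] [MeasurableSpace γ]
  [MeasurableSpace δ] {μ : Measure α} {ν : Measure β}

lemma Measure.fst_map_prodMap {π : Measure (α × β)} {F : α → γ} {G : β → δ}
    (hF : Measurable F) (hG : Measurable G) :
    (π.map (Prod.map F G)).fst = π.fst.map F := by
  rw [Measure.fst, Measure.map_map measurable_fst (hF.prodMap hG), Measure.fst,
    Measure.map_map hF measurable_fst]
  rfl

lemma Measure.snd_map_prodMap {π : Measure (α × β)} {F : α → γ} {G : β → δ}
    (hF : Measurable F) (hG : Measurable G) :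
    (π.map (Prod.map F G)).snd = π.snd.map G := by
  rw [Measure.snd, Measure.map_map measurable_snd (hF.prodMap hG), Measure.snd,
    Measure.map_map hG measurable_snd]
  rfl

lemma map_prodMap_mem_couplings {π : Measure (α × β)} (hπ : π ∈ Couplings μ ν)
    {F : α → γ} {G : β → δ} (hF : Measurable F) (hG : Measurable G) :
    π.map (Prod.map F G) ∈ Couplings (μ.map F) (ν.map G) := by
  obtain ⟨hπ₁, hπ₂⟩ := hπ
  exact ⟨by rw [Measure.fst_map_prodMap hF hG, hπ₁], by rw [Measure.snd_map_prodMap hF hG, hπ₂]⟩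

lemma Measure.fst_map_graph {f : α → γ} (hf : Measurable f) :
    (μ.map fun x => (x, f x)).fst = μ :=
  (Measure.fst_map_prodMk hf).trans Measure.map_id

lemma ae_map_graph_eq [MeasurableEq γ] {f : α → γ} (hf : Measurable f) :
    ∀ᵐ z ∂μ.map (fun x => (x, f x)), f z.1 = z.2 :=
  (ae_map_iff (measurable_id.prodMk hf).aemeasurable
    (measurableSet_eq_fun (hf.comp measurable_fst) measurable_snd)).2 (ae_of_all _ fun _ => rfl)

lemma ae_mem_graph_of_mem_couplings [MeasurableEq γ] [MeasurableEq δ] {f : α → γ} {g : β → δ}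
    (hf : Measurable f) (hg : Measurable g) {ρ : Measure ((α × γ) × (β × δ))}
    (hρ : ρ ∈ Couplings (μ.map fun x => (x, f x)) (ν.map fun y => (y, g y))) :
    ∀ᵐ w ∂ρ, f w.1.1 = w.1.2 ∧ g w.2.1 = w.2.2 := by
  obtain ⟨hρ₁, hρ₂⟩ := hρ
  have h₁ := ae_map_graph_eq (μ := μ) hf
  have h₂ := ae_map_graph_eq (μ := ν) hg
  rw [← hρ₁] at h₁
  rw [← hρ₂] at h₂
  exact (ae_of_ae_map measurable_fst.aemeasurable h₁).and
    (ae_of_ae_map measurable_snd.aemeasurable h₂)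

theorem setOf_integral_couplings_map_graph [MeasurableEq γ] [MeasurableEq δ]
    {f : α → γ} {g : β → δ} (hf : Measurable f) (hg : Measurable g)
    {c : (α × γ) × (β × δ) → ℝ} (hc : Measurable c) :
    {r : ℝ | ∃ π ∈ Couplings μ ν, r = ∫ z, c ((z.1, f z.1), (z.2, g z.2)) ∂π} =
      {r : ℝ | ∃ ρ ∈ Couplings (μ.map fun x => (x, f x)) (ν.map fun y => (y, g y)),
        r = ∫ w, c w ∂ρ} := by
  have hF : Measurable fun x => (x, f x) := measurable_id.prodMk hf
  have hG : Measurable fun y => (y, g y) := measurable_id.prodMk hg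
  ext r
  constructor
  · rintro ⟨π, hπ, rfl⟩
    refine ⟨π.map (Prod.map _ _), map_prodMap_mem_couplings hπ hF hG, ?_⟩
    rw [integral_map (hF.prodMap hG).aemeasurable hc.aestronglyMeasurable]
    rfl
  · rintro ⟨ρ, hρ, rfl⟩
    refine ⟨ρ.map (Prod.map Prod.fst Prod.fst), ?_, ?_⟩
    · have hμ : (μ.map fun x => (x, f x)).map Prod.fst = μ := Measure.fst_map_graph hf
      have hν : (ν.map fun y => (y, g y)).map Prod.fst = ν := Measure.fst_map_graph hg
      simpa only [hμ, hν] using map_prodMap_mem_couplings hρ measurable_fst measurable_fst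
    · have hc' : Measurable fun z : α × β => c ((z.1, f z.1), (z.2, g z.2)) :=
        hc.comp (hF.prodMap hG)
      rw [integral_map (measurable_fst.prodMap measurable_fst).aemeasurable
        hc'.aestronglyMeasurable]
      refine integral_congr_ae ?_
      filter_upwards [ae_mem_graph_of_mem_couplings hf hg hρ] with w ⟨hw₁, hw₂⟩
      simp only [Prod.map_fst, Prod.map_snd, hw₁, hw₂]

end GraphCouplings

theorem tlp_eq_OT_on_graphs_general
    {d m : ℕ} (p lam : ℝ)
    (μ ν : Measure (Fin d → ℝ))
    (f g : (Fin d → ℝ) → (Fin m → ℝ))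
    (hf : Measurable f) (hg : Measurable g) :
    TLpPow p lam f g μ ν =
      sInf {r : ℝ | ∃ γ ∈ Couplings (μ.map (fun x => (x, f x)))
          (ν.map (fun y => (y, g y))),
        r = ∫ zw : ((Fin d → ℝ) × (Fin m → ℝ)) × ((Fin d → ℝ) × (Fin m → ℝ)),
          ((1 / lam) * lpPow p zw.1.1 zw.2.1 + lpPow p zw.1.2 zw.2.2) ∂γ} :=
  congrArg sInf <| setOf_integral_couplings_map_graph hf hg
    (c := fun zw => (1 / lam) * lpPow p zw.1.1 zw.2.1 + lpPow p zw.1.2 zw.2.2) (by fun_prop)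

/-- The `TL^p_λ` distance equals the optimal transport cost between the measures raised
onto the graphs of `f` and `g`, with cost
`c_λ((x,u),(y,v)) = (1/λ)|x−y|_p^p + |u−v|_p^p`. -/
theorem tlp_eq_OT_on_graphs
    {d m : ℕ} (p lam : ℝ) (hp : 1 ≤ p) (hlam : 0 < lam)
    (Ω : Set (Fin d → ℝ)) (hΩo : IsOpen Ω) (hΩb : Bornology.IsBounded Ω)
    (μ ν : Measure (Fin d → ℝ))
    [IsProbabilityMeasure μ] [IsProbabilityMeasure ν]
    (hμ : μ Ωᶜ = 0) (hν : ν Ωᶜ = 0)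
    (f g : (Fin d → ℝ) → (Fin m → ℝ))
    (hf : Measurable f) (hg : Measurable g)
    (hfp : Integrable (fun x => lpPow p (f x) 0) μ)
    (hgp : Integrable (fun x => lpPow p (g x) 0) ν) :
    TLpPow p lam f g μ ν =
      sInf {r : ℝ | ∃ γ ∈ Couplings (μ.map (fun x => (x, f x)))
          (ν.map (fun y => (y, g y))),
        r = ∫ zw : ((Fin d → ℝ) × (Fin m → ℝ)) × ((Fin d → ℝ) × (Fin m → ℝ)),
          ((1 / lam) * lpPow p zw.1.1 zw.2.1 + lpPow p zw.1.2 zw.2.2) ∂γ} :=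
  tlp_eq_OT_on_graphs_general p lam μ ν f g hf hg
end
end

section
/- Optimal transport is insensitive to high-frequency perturbations: let n be a positive integer and 0 ≤ A ≤ 1, let μ be the measure on [0,1] with density 1 (Lebesgue measure) and ν the measure on [0,1] with density 1 + A sin(2πnx) (both probability measures). Then the optimal transport cost with cost c(x,y) = |x−y| satisfies inf_{π ∈ Π(μ,ν)} ∫_{[0,1]×[0,1]} |x−y| dπ(x,y) ≤ A/n. -/
open MeasureTheory

noncomputable section

open ENNReal

namespace OTAux

-- union of cells
lemma Ico_union (n : ℕ) (hn : 0 < n) :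
    Set.Ico (0:ℝ) 1 = ⋃ k ∈ Finset.range n, Set.Ico ((k:ℝ)/n) (((k:ℝ)+1)/n) := by
  have hn' : (0:ℝ) < n := by exact_mod_cast hn
  ext x
  simp only [Set.mem_Ico, Set.mem_iUnion, Finset.mem_range]
  constructor
  · rintro ⟨h0, h1⟩
    have hx0 : (0:ℝ) ≤ (n:ℝ) * x := by positivity
    refine ⟨⌊(n:ℝ)*x⌋₊, ?_, ?_, ?_⟩
    · rw [Nat.floor_lt hx0]
      calc (n:ℝ) * x < n * 1 := by nlinarith
        _ = n := by ring
    · rw [div_le_iff₀ hn']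
      calc (⌊(n:ℝ)*x⌋₊ : ℝ) ≤ (n:ℝ)*x := Nat.floor_le hx0
        _ = x * n := by ring
    · rw [lt_div_iff₀ hn']
      calc x * n = (n:ℝ) * x := by ring
        _ < ⌊(n:ℝ)*x⌋₊ + 1 := Nat.lt_floor_add_one _
  · rintro ⟨k, hk, h1, h2⟩
    constructor
    · exact le_trans (by positivity) h1
    · calc x < ((k:ℝ)+1)/n := h2
        _ ≤ (n:ℝ)/n := by
            gcongr
            exact_mod_cast hk
        _ = 1 := div_self hn'.ne'

lemma cells_disjoint (n : ℕ) :
    (↑(Finset.range n) : Set ℕ).PairwiseDisjoint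
      (fun k => Set.Ico ((k:ℝ)/n) (((k:ℝ)+1)/n)) := by
  intro i _ j _ hij
  have : ∀ a b : ℕ, a < b →
      Disjoint (Set.Ico ((a:ℝ)/n) (((a:ℝ)+1)/n)) (Set.Ico ((b:ℝ)/n) (((b:ℝ)+1)/n)) := by
    intro a b hab
    apply Set.Ico_disjoint_Ico.mpr
    have h1 : ((a:ℝ)+1)/n ≤ (b:ℝ)/n := by
      rcases Nat.eq_zero_or_pos n with rfl | hn
      · simp
      · gcongr
        exact_mod_cast hab
    exact le_trans inf_le_left (le_trans h1 le_sup_right)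
  rcases hij.lt_or_gt with h | h
  · exact this i j h
  · exact (this j i h).symm

lemma cell_subset (n : ℕ) (k : ℕ) (hk : k < n) :
    Set.Ico ((k:ℝ)/n) (((k:ℝ)+1)/n) ⊆ Set.Icc (0:ℝ) 1 := by
  have hn' : (0:ℝ) < n := by exact_mod_cast Nat.pos_of_ne_zero (by omega)
  intro x hx
  constructor
  · exact le_trans (by positivity) hx.1
  · calc x ≤ ((k:ℝ)+1)/n := hx.2.le
      _ ≤ (n:ℝ)/n := by gcongr; exact_mod_cast hk
      _ = 1 := div_self hn'.ne'

lemma sin_cell_integral (n : ℕ) (hn : 0 < n) (k : ℕ) :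
    ∫ x in ((k:ℝ)/n)..(((k:ℝ)+1)/n), Real.sin (2 * Real.pi * n * x) = 0 := by
  have hn' : (0:ℝ) < n := by exact_mod_cast hn
  have hc : (2 * Real.pi * n) ≠ 0 := by positivity
  have := intervalIntegral.integral_comp_mul_left (a := ((k:ℝ)/n)) (b := (((k:ℝ)+1)/n))
    (fun x => Real.sin x) hc
  rw [this, integral_sin]
  have e1 : 2 * Real.pi * n * ((k:ℝ)/n) = (k:ℤ) * (2 * Real.pi) := by
    push_cast; field_simp
  have e2 : 2 * Real.pi * n * (((k:ℝ)+1)/n) = ((k:ℤ)+1) * (2 * Real.pi) := by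
    push_cast; field_simp
  rw [e1, e2, Real.cos_int_mul_two_pi]
  have : (((k:ℤ):ℝ)+1) = (((k+1:ℤ)):ℝ) := by push_cast; ring
  rw [this, Real.cos_int_mul_two_pi]
  simp

lemma cont_f (n : ℕ) (A : ℝ) : Continuous (fun x : ℝ => 1 + A * Real.sin (2 * Real.pi * n * x)) := by
  continuity

lemma mass_integral_eq (n : ℕ) (hn : 0 < n) (A : ℝ) (k : ℕ) :
    ∫ x in Set.Ico ((k:ℝ)/n) (((k:ℝ)+1)/n),
        max 0 ((1 + A * Real.sin (2 * Real.pi * n * x)) - 1)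
      = ∫ x in Set.Ico ((k:ℝ)/n) (((k:ℝ)+1)/n),
        max 0 (1 - (1 + A * Real.sin (2 * Real.pi * n * x))) := by
  have hn' : (0:ℝ) < n := by exact_mod_cast hn
  have hab : ((k:ℝ)/n) ≤ (((k:ℝ)+1)/n) := by gcongr; linarith
  have hq : Continuous (fun x : ℝ => max 0 ((1 + A * Real.sin (2 * Real.pi * n * x)) - 1)) :=
    continuous_const.max ((cont_f n A).sub continuous_const)
  have hp : Continuous (fun x : ℝ => max 0 (1 - (1 + A * Real.sin (2 * Real.pi * n * x)))) :=
    continuous_const.max (continuous_const.sub (cont_f n A))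
  have conv : ∀ g : ℝ → ℝ, ∫ x in Set.Ico ((k:ℝ)/n) (((k:ℝ)+1)/n), g x
      = ∫ x in ((k:ℝ)/n)..(((k:ℝ)+1)/n), g x := by
    intro g
    rw [intervalIntegral.integral_of_le hab, integral_Ico_eq_integral_Ioo,
      integral_Ioc_eq_integral_Ioo]
  rw [conv, conv]
  have hsub : (∫ x in ((k:ℝ)/n)..(((k:ℝ)+1)/n),
        max 0 ((1 + A * Real.sin (2 * Real.pi * n * x)) - 1))
      - (∫ x in ((k:ℝ)/n)..(((k:ℝ)+1)/n),
        max 0 (1 - (1 + A * Real.sin (2 * Real.pi * n * x)))) = 0 := by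
    rw [← intervalIntegral.integral_sub (hq.intervalIntegrable _ _) (hp.intervalIntegrable _ _)]
    have : ∀ x : ℝ, max 0 ((1 + A * Real.sin (2 * Real.pi * n * x)) - 1)
        - max 0 (1 - (1 + A * Real.sin (2 * Real.pi * n * x)))
        = A * Real.sin (2 * Real.pi * n * x) := by
      intro x
      rcases le_total (A * Real.sin (2 * Real.pi * n * x)) 0 with h | h
      · rw [max_eq_left (by linarith), max_eq_right (by linarith)]; ring
      · rw [max_eq_right (by linarith), max_eq_left (by linarith)]; ring
    simp_rw [this]
    rw [intervalIntegral.integral_const_mul, sin_cell_integral n hn k, mul_zero]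
  linarith

variable (n : ℕ) (A : ℝ)

def F (x : ℝ) : ℝ := 1 + A * Real.sin (2 * Real.pi * n * x)

def μ0 : Measure ℝ := volume.restrict (Set.Icc (0:ℝ) 1)

def ρd (x : ℝ) : ℝ≥0∞ := min 1 (ENNReal.ofReal (F n A x))
def pd (x : ℝ) : ℝ≥0∞ := ENNReal.ofReal (max 0 (1 - F n A x))
def qd (x : ℝ) : ℝ≥0∞ := ENNReal.ofReal (max 0 (F n A x - 1))

def ρm : Measure ℝ := (μ0).withDensity (ρd n A)
def P : Measure ℝ := (μ0).withDensity (pd n A)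
def Q : Measure ℝ := (μ0).withDensity (qd n A)

def cell (k : ℕ) : Set ℝ := Set.Ico ((k:ℝ)/n) (((k:ℝ)+1)/n)

lemma cell_meas (k : ℕ) : MeasurableSet (cell n k) := measurableSet_Ico

def am (k : ℕ) : Measure ℝ := (P n A).restrict (cell n k)
def bm (k : ℕ) : Measure ℝ := (Q n A).restrict (cell n k)
def mk' (k : ℕ) : ℝ≥0∞ := am n A k Set.univ

def pi' : Measure (ℝ × ℝ) :=
  (ρm n A).map (fun x => (x, x)) +
    ∑ k ∈ Finset.range n, (mk' n A k)⁻¹ • ((am n A k).prod (bm n A k))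

lemma measurable_F : Measurable (F n A) := (cont_f n A).measurable
lemma measurable_pd : Measurable (pd n A) :=
  ((continuous_const.max (continuous_const.sub (cont_f n A))).measurable).ennreal_ofReal
lemma measurable_qd : Measurable (qd n A) :=
  ((continuous_const.max ((cont_f n A).sub continuous_const)).measurable).ennreal_ofReal
lemma measurable_ρd : Measurable (ρd n A) :=
  measurable_const.min (measurable_F n A).ennreal_ofReal

lemma F_nonneg (hA0 : 0 ≤ A) (hA1 : A ≤ 1) (x : ℝ) : 0 ≤ F n A x := by
  have h1 : -1 ≤ Real.sin (2 * Real.pi * n * x) := Real.neg_one_le_sin _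
  have : -A ≤ A * Real.sin (2 * Real.pi * n * x) := by nlinarith
  simp only [F]; linarith

lemma ρd_add_pd (hA0 : 0 ≤ A) (hA1 : A ≤ 1) (x : ℝ) : ρd n A x + pd n A x = 1 := by
  have hF := F_nonneg n A hA0 hA1 x
  simp only [ρd, pd]
  rcases le_total (F n A x) 1 with h | h
  · rw [min_eq_right (ENNReal.ofReal_le_one.mpr h), max_eq_right (by linarith),
      ← ENNReal.ofReal_add hF (by linarith), ← ENNReal.ofReal_one]
    congr 1; ring
  · rw [min_eq_left (ENNReal.one_le_ofReal.mpr h), max_eq_left (by linarith)]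
    simp
lemma ρd_add_qd (x : ℝ) : ρd n A x + qd n A x = ENNReal.ofReal (F n A x) := by
  simp only [ρd, qd]
  rcases le_total (F n A x) 1 with h | h
  · rw [min_eq_right (ENNReal.ofReal_le_one.mpr h), max_eq_left (by linarith)]
    simp
  · rw [min_eq_left (ENNReal.one_le_ofReal.mpr h), max_eq_right (by linarith),
      ← ENNReal.ofReal_one, ← ENNReal.ofReal_add (by norm_num) (by linarith)]
    congr 1; ring

lemma μ0_eq (hA0 : 0 ≤ A) (hA1 : A ≤ 1) : μ0 = ρm n A + P n A := by
  rw [ρm, P, ← withDensity_add_right _ (measurable_pd n A)]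
  have : (ρd n A + pd n A) = 1 := by
    funext x; exact ρd_add_pd n A hA0 hA1 x
  rw [this, withDensity_one]

lemma ν_eq : (μ0).withDensity (fun x => ENNReal.ofReal (F n A x)) = ρm n A + Q n A := by
  rw [ρm, Q, ← withDensity_add_right _ (measurable_qd n A)]
  congr 1
  funext x; exact (ρd_add_qd n A x).symm

lemma μ0_compl : μ0 ((Set.Ico (0:ℝ) 1)ᶜ) = 0 := by
  rw [μ0, Measure.restrict_apply (measurableSet_Ico.compl)]
  have : (Set.Ico (0:ℝ) 1)ᶜ ∩ Set.Icc (0:ℝ) 1 = {1} := by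
    ext x
    simp only [Set.mem_inter_iff, Set.mem_compl_iff, Set.mem_Ico, Set.mem_Icc,
      Set.mem_singleton_iff, not_and, not_lt]
    constructor
    · rintro ⟨h1, h2, h3⟩; linarith [h1 h2]
    · rintro rfl; exact ⟨fun _ => le_refl 1, by norm_num⟩
  rw [this, Real.volume_singleton]

lemma restrict_sum_of_null (hn : 0 < n) (ξ : Measure ℝ)
    (hξ : ξ ((Set.Ico (0:ℝ) 1)ᶜ) = 0) :
    ξ = ∑ k ∈ Finset.range n, ξ.restrict (cell n k) := by
  ext s hs
  rw [Measure.finset_sum_apply]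
  have h1 : ξ s = ξ (s ∩ Set.Ico (0:ℝ) 1) := by
    apply le_antisymm ?_ (measure_mono Set.inter_subset_left)
    calc ξ s ≤ ξ ((s ∩ Set.Ico (0:ℝ) 1) ∪ (Set.Ico (0:ℝ) 1)ᶜ) := by
          apply measure_mono
          intro x hx
          by_cases h : x ∈ Set.Ico (0:ℝ) 1
          · exact Or.inl ⟨hx, h⟩
          · exact Or.inr h
      _ ≤ ξ (s ∩ Set.Ico (0:ℝ) 1) + ξ ((Set.Ico (0:ℝ) 1)ᶜ) := measure_union_le _ _
      _ = ξ (s ∩ Set.Ico (0:ℝ) 1) := by rw [hξ, add_zero]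
  rw [h1, Ico_union n hn]
  have h2 : s ∩ ⋃ k ∈ Finset.range n, Set.Ico ((k:ℝ)/n) (((k:ℝ)+1)/n)
      = ⋃ k ∈ Finset.range n, (s ∩ Set.Ico ((k:ℝ)/n) (((k:ℝ)+1)/n)) := by
    rw [Set.inter_iUnion₂]
  rw [h2, measure_biUnion_finset]
  · apply Finset.sum_congr rfl
    intro k _
    rw [Measure.restrict_apply hs]; rfl
  · intro i hi j hj hij
    exact Disjoint.mono Set.inter_subset_right Set.inter_subset_right
      (cells_disjoint n hi hj hij)
  · exact fun k _ => hs.inter measurableSet_Ico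

lemma P_compl : P n A ((Set.Ico (0:ℝ) 1)ᶜ) = 0 :=
  withDensity_absolutelyContinuous _ _ (μ0_compl)
lemma Q_compl : Q n A ((Set.Ico (0:ℝ) 1)ᶜ) = 0 :=
  withDensity_absolutelyContinuous _ _ (μ0_compl)

lemma P_sum (hn : 0 < n) : P n A = ∑ k ∈ Finset.range n, am n A k :=
  restrict_sum_of_null n hn _ (P_compl n A)
lemma Q_sum (hn : 0 < n) : Q n A = ∑ k ∈ Finset.range n, bm n A k :=
  restrict_sum_of_null n hn _ (Q_compl n A)

lemma mk'_le (hn : 0 < n) (hA0 : 0 ≤ A) (k : ℕ) :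
    mk' n A k ≤ ENNReal.ofReal (A / n) := by
  have hn' : (0:ℝ) < n := by exact_mod_cast hn
  have h1 : mk' n A k = P n A (cell n k) := by
    rw [mk', am, Measure.restrict_apply_univ]
  rw [h1, P, withDensity_apply _ (cell_meas n k)]
  calc ∫⁻ x in cell n k, pd n A x ∂μ0
      ≤ ∫⁻ _ in cell n k, ENNReal.ofReal A ∂μ0 := by
        apply setLIntegral_mono measurable_const
        intro x _
        apply ENNReal.ofReal_le_ofReal
        simp only [F]
        have := Real.neg_one_le_sin (2 * Real.pi * n * x)
        have h2 : 1 - (1 + A * Real.sin (2 * Real.pi * n * x)) ≤ A := by nlinarith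
        exact max_le (by linarith) h2
    _ = ENNReal.ofReal A * μ0 (cell n k) := setLIntegral_const _ _
    _ ≤ ENNReal.ofReal A * ENNReal.ofReal (1/n) := by
        apply mul_le_mul_right
        rw [μ0, Measure.restrict_apply (cell_meas n k)]
        calc volume (cell n k ∩ Set.Icc 0 1) ≤ volume (cell n k) :=
              measure_mono Set.inter_subset_left
          _ = ENNReal.ofReal (((k:ℝ)+1)/n - (k:ℝ)/n) := by rw [cell]; exact Real.volume_Ico
          _ = ENNReal.ofReal (1/n) := by congr 1; field_simp; ring
    _ = ENNReal.ofReal (A / n) := by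
        rw [← ENNReal.ofReal_mul hA0]; congr 1; field_simp

lemma mk'_ne_top (hn : 0 < n) (hA0 : 0 ≤ A) (k : ℕ) : mk' n A k ≠ ⊤ :=
  ((mk'_le n A hn hA0 k).trans_lt ENNReal.ofReal_lt_top).ne

lemma μ0_restrict_cell (hn : 0 < n) (k : ℕ) (hk : k < n) :
    μ0.restrict (cell n k) = volume.restrict (cell n k) := by
  have hsub : cell n k ⊆ Set.Icc (0:ℝ) 1 := cell_subset n k hk
  rw [μ0, Measure.restrict_restrict (cell_meas n k),
    Set.inter_eq_self_of_subset_left hsub]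

lemma bm_univ_eq (hn : 0 < n) (hA0 : 0 ≤ A) (k : ℕ) (hk : k < n) :
    bm n A k Set.univ = mk' n A k := by
  have hIp : IntegrableOn (fun x => max 0 (1 - F n A x)) (cell n k) volume := by
    apply ((continuous_const.max (continuous_const.sub (cont_f n A))).integrableOn_Icc
      (a := (k:ℝ)/n) (b := ((k:ℝ)+1)/n)).mono_set
    rw [cell]; exact Set.Ico_subset_Icc_self
  have hIq : IntegrableOn (fun x => max 0 (F n A x - 1)) (cell n k) volume := by
    apply ((continuous_const.max ((cont_f n A).sub continuous_const)).integrableOn_Icc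
      (a := (k:ℝ)/n) (b := ((k:ℝ)+1)/n)).mono_set
    rw [cell]; exact Set.Ico_subset_Icc_self
  have h1 : bm n A k Set.univ = ENNReal.ofReal (∫ x in cell n k, max 0 (F n A x - 1)) := by
    rw [bm, Measure.restrict_apply_univ, Q, withDensity_apply _ (cell_meas n k),
      μ0_restrict_cell n hn k hk]
    simp only [qd]
    rw [
      ← ofReal_integral_eq_lintegral_ofReal hIq
        (Filter.Eventually.of_forall fun x => le_max_left _ _)]
  have h2 : mk' n A k = ENNReal.ofReal (∫ x in cell n k, max 0 (1 - F n A x)) := by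
    rw [mk', am, Measure.restrict_apply_univ, P, withDensity_apply _ (cell_meas n k),
      μ0_restrict_cell n hn k hk]
    simp only [pd]
    rw [
      ← ofReal_integral_eq_lintegral_ofReal hIp
        (Filter.Eventually.of_forall fun x => le_max_left _ _)]
  rw [h1, h2]
  congr 1
  exact mass_integral_eq n hn A k

lemma sfinite_am (k : ℕ) : SFinite (am n A k) := by
  unfold am P μ0; infer_instance
lemma sfinite_bm (k : ℕ) : SFinite (bm n A k) := by
  unfold bm Q μ0; infer_instance

lemma hdm : Measurable (fun x : ℝ => (x, x)) := measurable_id.prodMk measurable_id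

lemma fst_pi' (hn : 0 < n) (hA0 : 0 ≤ A) (hA1 : A ≤ 1) : (pi' n A).fst = μ0 := by
  have := fun k => sfinite_am n A k
  have := fun k => sfinite_bm n A k
  ext s hs
  rw [Measure.fst_apply hs, pi', Measure.add_apply, Measure.finset_sum_apply]
  have hps : MeasurableSet (Prod.fst ⁻¹' s : Set (ℝ × ℝ)) := measurable_fst hs
  have hdiag : ((ρm n A).map (fun x => (x, x))) (Prod.fst ⁻¹' s) = ρm n A s := by
    rw [Measure.map_apply hdm hps]
    rfl
  have hterm : ∀ k ∈ Finset.range n,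
      ((mk' n A k)⁻¹ • ((am n A k).prod (bm n A k))) (Prod.fst ⁻¹' s) = am n A k s := by
    intro k hk
    rw [Measure.smul_apply, smul_eq_mul]
    have hpre : (Prod.fst ⁻¹' s : Set (ℝ × ℝ)) = s ×ˢ Set.univ := by
      ext ⟨x, y⟩; simp
    rw [hpre, Measure.prod_prod, bm_univ_eq n A hn hA0 k (Finset.mem_range.mp hk)]
    rcases eq_or_ne (mk' n A k) 0 with h0 | h0
    · have ha : am n A k s = 0 :=
        le_antisymm ((measure_mono (Set.subset_univ s)).trans (le_of_eq h0)) (zero_le)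
      rw [ha, h0]; simp
    · rw [mul_comm (am n A k s), ← mul_assoc,
        ENNReal.inv_mul_cancel h0 (mk'_ne_top n A hn hA0 k), one_mul]
  rw [hdiag, Finset.sum_congr rfl hterm]
  have h1 := congrArg (fun m : Measure ℝ => m s) (μ0_eq n A hA0 hA1)
  have h2 := congrArg (fun m : Measure ℝ => m s) (P_sum n A hn)
  simp only [Measure.add_apply, Measure.finset_sum_apply] at h1 h2
  rw [← h2, ← h1]

lemma snd_pi' (hn : 0 < n) (hA0 : 0 ≤ A) (hA1 : A ≤ 1) :
    (pi' n A).snd = μ0.withDensity (fun x => ENNReal.ofReal (F n A x)) := by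
  have := fun k => sfinite_am n A k
  have := fun k => sfinite_bm n A k
  ext s hs
  rw [Measure.snd_apply hs, pi', Measure.add_apply, Measure.finset_sum_apply]
  have hps : MeasurableSet (Prod.snd ⁻¹' s : Set (ℝ × ℝ)) := measurable_snd hs
  have hdiag : ((ρm n A).map (fun x => (x, x))) (Prod.snd ⁻¹' s) = ρm n A s := by
    rw [Measure.map_apply hdm hps]
    rfl
  have hterm : ∀ k ∈ Finset.range n,
      ((mk' n A k)⁻¹ • ((am n A k).prod (bm n A k))) (Prod.snd ⁻¹' s) = bm n A k s := by
    intro k hk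
    rw [Measure.smul_apply, smul_eq_mul]
    have hpre : (Prod.snd ⁻¹' s : Set (ℝ × ℝ)) = Set.univ ×ˢ s := by
      ext ⟨x, y⟩; simp
    rw [hpre, Measure.prod_prod]
    rcases eq_or_ne (mk' n A k) 0 with h0 | h0
    · have hb : bm n A k s = 0 := by
        apply le_antisymm ?_ (zero_le)
        calc bm n A k s ≤ bm n A k Set.univ := measure_mono (Set.subset_univ s)
          _ = mk' n A k := bm_univ_eq n A hn hA0 k (Finset.mem_range.mp hk)
          _ = 0 := h0
      rw [hb]; simp
    · rw [show am n A k Set.univ = mk' n A k from rfl, ← mul_assoc,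
        ENNReal.inv_mul_cancel h0 (mk'_ne_top n A hn hA0 k), one_mul]
  rw [hdiag, Finset.sum_congr rfl hterm]
  have h1 := congrArg (fun m : Measure ℝ => m s) (ν_eq n A)
  have h2 := congrArg (fun m : Measure ℝ => m s) (Q_sum n A hn)
  simp only [Measure.add_apply, Measure.finset_sum_apply] at h1 h2
  rw [← h2, ← h1]

lemma sfinite_P : SFinite (P n A) := by unfold P μ0; infer_instance
lemma sfinite_Q : SFinite (Q n A) := by unfold Q μ0; infer_instance

lemma cost_le (hn : 0 < n) (hA0 : 0 ≤ A) :
    ∫ z : ℝ × ℝ, |z.1 - z.2| ∂(pi' n A) ≤ A / n := by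
  have := fun k => sfinite_am n A k
  have := fun k => sfinite_bm n A k
  have := sfinite_P n A
  have := sfinite_Q n A
  have hn' : (0:ℝ) < n := by exact_mod_cast hn
  have hmeas : Measurable (fun z : ℝ × ℝ => |z.1 - z.2|) :=
    (measurable_fst.sub measurable_snd).abs
  rw [integral_eq_lintegral_of_nonneg_ae
    (Filter.Eventually.of_forall fun z => abs_nonneg _) hmeas.aestronglyMeasurable]
  apply ENNReal.toReal_le_of_le_ofReal (by positivity)
  rw [pi', lintegral_add_measure, lintegral_finset_sum_measure]
  have hdiag : ∫⁻ z : ℝ × ℝ, ENNReal.ofReal |z.1 - z.2|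
      ∂((ρm n A).map (fun x => (x, x))) = 0 := by
    rw [lintegral_map hmeas.ennreal_ofReal hdm]
    simp
  have hterm : ∀ k ∈ Finset.range n,
      ∫⁻ z : ℝ × ℝ, ENNReal.ofReal |z.1 - z.2|
        ∂((mk' n A k)⁻¹ • ((am n A k).prod (bm n A k)))
      ≤ ENNReal.ofReal (1/n) * mk' n A k := by
    intro k hk
    have hk' := Finset.mem_range.mp hk
    rw [lintegral_smul_measure]
    have hprodeq : (am n A k).prod (bm n A k)
        = ((P n A).prod (Q n A)).restrict (cell n k ×ˢ cell n k) := by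
      rw [am, bm]; exact Measure.prod_restrict _ _
    have hbound : ∫⁻ z : ℝ × ℝ, ENNReal.ofReal |z.1 - z.2|
        ∂((am n A k).prod (bm n A k))
        ≤ ENNReal.ofReal (1/n) * (mk' n A k * mk' n A k) := by
      rw [hprodeq]
      calc ∫⁻ z : ℝ × ℝ in cell n k ×ˢ cell n k, ENNReal.ofReal |z.1 - z.2|
            ∂((P n A).prod (Q n A))
          ≤ ∫⁻ _ : ℝ × ℝ in cell n k ×ˢ cell n k, ENNReal.ofReal (1/n)
            ∂((P n A).prod (Q n A)) := by
            apply setLIntegral_mono measurable_const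
            rintro ⟨x, y⟩ ⟨hx, hy⟩
            apply ENNReal.ofReal_le_ofReal
            simp only [cell, Set.mem_Ico] at hx hy
            have he : ((k:ℝ)+1)/n = (k:ℝ)/n + 1/n := by ring
            rw [abs_sub_le_iff]
            constructor <;> [skip; skip] <;> · simp only []; linarith [hx.1, hx.2, hy.1, hy.2]
        _ = ENNReal.ofReal (1/n) * ((P n A).prod (Q n A)) (cell n k ×ˢ cell n k) :=
            setLIntegral_const _ _
        _ = ENNReal.ofReal (1/n) * (mk' n A k * mk' n A k) := by
            rw [Measure.prod_prod]
            congr 2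
            · rw [mk', am, Measure.restrict_apply_univ]
            · rw [← bm_univ_eq n A hn hA0 k hk', bm, Measure.restrict_apply_univ]
    calc (mk' n A k)⁻¹ * ∫⁻ z : ℝ × ℝ, ENNReal.ofReal |z.1 - z.2|
          ∂((am n A k).prod (bm n A k))
        ≤ (mk' n A k)⁻¹ * (ENNReal.ofReal (1/n) * (mk' n A k * mk' n A k)) :=
          mul_le_mul_right hbound _
      _ ≤ ENNReal.ofReal (1/n) * mk' n A k := by
          rcases eq_or_ne (mk' n A k) 0 with h0 | h0
          · rw [h0]; simp
          · rw [mul_comm (ENNReal.ofReal (1/n)), mul_assoc, ← mul_assoc,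
              ENNReal.inv_mul_cancel h0 (mk'_ne_top n A hn hA0 k), one_mul,
              mul_comm]
  calc (∫⁻ z : ℝ × ℝ, ENNReal.ofReal |z.1 - z.2| ∂((ρm n A).map (fun x => (x, x))))
        + ∑ k ∈ Finset.range n, ∫⁻ z : ℝ × ℝ, ENNReal.ofReal |z.1 - z.2|
          ∂((mk' n A k)⁻¹ • ((am n A k).prod (bm n A k)))
      ≤ 0 + ∑ k ∈ Finset.range n, ENNReal.ofReal (1/n) * mk' n A k := by
        exact add_le_add (le_of_eq hdiag) (Finset.sum_le_sum hterm)
    _ ≤ ∑ k ∈ Finset.range n, ENNReal.ofReal (1/n) * ENNReal.ofReal (A/n) := by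
        rw [zero_add]
        exact Finset.sum_le_sum fun k _ => mul_le_mul_right (mk'_le n A hn hA0 k) _
    _ = ENNReal.ofReal (A / n) := by
        rw [Finset.sum_const, Finset.card_range, nsmul_eq_mul,
          ← ENNReal.ofReal_natCast n, ← ENNReal.ofReal_mul (by positivity),
          ← ENNReal.ofReal_mul (by positivity)]
        congr 1
        field_simp

end OTAux


/-- Optimal transport is insensitive to high-frequency perturbations: for `μ` the
Lebesgue measure on `[0,1]` and `ν` the measure on `[0,1]` with density
`1 + A sin(2πnx)` (with `n` a positive integer and `0 ≤ A ≤ 1`), the optimal transport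
cost with cost `|x−y|` satisfies `OT(μ,ν) ≤ A/n`. -/
theorem ot_insensitive_high_frequency
    (n : ℕ) (hn : 0 < n) (A : ℝ) (hA0 : 0 ≤ A) (hA1 : A ≤ 1) :
    sInf {r : ℝ | ∃ π ∈ Couplings
        (volume.restrict (Set.Icc (0:ℝ) 1))
        ((volume.restrict (Set.Icc (0:ℝ) 1)).withDensity
          (fun x => ENNReal.ofReal (1 + A * Real.sin (2 * Real.pi * n * x)))),
      r = ∫ z : ℝ × ℝ, |z.1 - z.2| ∂π} ≤ A / n := by
  apply csInf_le_of_le (b := ∫ z : ℝ × ℝ, |z.1 - z.2| ∂(OTAux.pi' n A))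
  · refine ⟨0, ?_⟩
    rintro r ⟨π, _, rfl⟩
    exact integral_nonneg fun z => abs_nonneg _
  · exact ⟨OTAux.pi' n A, ⟨OTAux.fst_pi' n A hn hA0 hA1, OTAux.snd_pi' n A hn hA0 hA1⟩, rfl⟩
  · exact OTAux.cost_le n A hn hA0
end
end
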